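/- arXiv:1110.2526 — 5 statements merged into one kernel-verified Lean document; each statement's English description precedes it below -/
import Mathlib

section
/- Let q(x) = c + dᵀx + xᵀQx be a quadratic polynomial on ℝⁿ with S(q) = {x : q(x) ≥ 0} nonempty and compact. If (x, X) ∈ ℝⁿ × Sym(n) satisfies the matrix [[1, xᵀ],[x, X]] ⪰ 0 and c + dᵀx + Q•X ≥ 0, then there exist finitely many points u₁,…,u_r ∈ S(q) and positive scalars λ₁,…,λ_r with Σλᵢ = 1 such that x = Σλᵢuᵢ and X = Σλᵢuᵢuᵢᵀ. -/
open Matrix Set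

lemma dp_symm {n : ℕ} {A : Matrix (Fin n) (Fin n) ℝ} (hA : A.IsSymm)
    (y w : Fin n → ℝ) : w ⬝ᵥ A *ᵥ y = y ⬝ᵥ A *ᵥ w := by
  rw [dotProduct_mulVec, ← mulVec_transpose, hA.eq, dotProduct_comm]

lemma quad_expand {n : ℕ} {A : Matrix (Fin n) (Fin n) ℝ} (hA : A.IsSymm)
    (y w : Fin n → ℝ) (t : ℝ) :
    (y + t • w) ⬝ᵥ A *ᵥ (y + t • w)
      = y ⬝ᵥ A *ᵥ y + 2 * t * (y ⬝ᵥ A *ᵥ w) + t ^ 2 * (w ⬝ᵥ A *ᵥ w) := by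
  have h := dp_symm hA y w
  simp only [mulVec_add, mulVec_smul, dotProduct_add, add_dotProduct,
    dotProduct_smul, smul_dotProduct, smul_eq_mul, h]
  ring

lemma isSymm_of_posdef {n : ℕ} {A : Matrix (Fin n) (Fin n) ℝ} (hA : A.PosDef) : A.IsSymm := by
  have h := hA.1
  rw [Matrix.IsSymm]
  ext i j
  rw [Matrix.transpose_apply]
  conv_lhs => rw [← h]
  simp [Matrix.conjTranspose_apply]

lemma rep_lemma {n : ℕ} (A : Matrix (Fin n) (Fin n) ℝ) (hA : A.PosDef) (x₀ : Fin n → ℝ)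
    (ρ : ℝ) (L : List (Fin n → ℝ)) :
    ∀ (p : Fin n → ℝ),
      (p - x₀) ⬝ᵥ A *ᵥ (p - x₀) + (L.map fun w => w ⬝ᵥ A *ᵥ w).sum ≤ ρ →
      ∃ (r : ℕ) (u : Fin r → Fin n → ℝ) (lam : Fin r → ℝ),
        (∀ i, (u i - x₀) ⬝ᵥ A *ᵥ (u i - x₀) ≤ ρ) ∧ (∀ i, 0 < lam i) ∧
        (∑ i, lam i) = 1 ∧ (∑ i, lam i • u i) = p ∧
        (∑ i, lam i • vecMulVec (u i) (u i))
          = vecMulVec p p + (L.map fun w => vecMulVec w w).sum := by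
  have hAs : A.IsSymm := isSymm_of_posdef hA
  induction L with
  | nil =>
    intro p hb
    refine ⟨1, fun _ => p, fun _ => 1, fun i => ?_, fun _ => one_pos, by simp, by simp, by simp⟩
    simpa using hb
  | cons w L ih =>
    intro p hb
    simp only [List.map_cons, List.sum_cons] at hb ⊢
    by_cases hw : w = 0
    · subst hw
      obtain ⟨r, u, lam, h1, h2, h3, h4, h5⟩ := ih p (by simpa using hb)
      have hz : vecMulVec (0 : Fin n → ℝ) (0 : Fin n → ℝ) = (0 : Matrix (Fin n) (Fin n) ℝ) := by
        ext i j; simp [vecMulVec_apply]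
      exact ⟨r, u, lam, h1, h2, h3, h4, by rw [hz, zero_add]; exact h5⟩
    · have ha : 0 < w ⬝ᵥ A *ᵥ w := by
        have := hA.dotProduct_mulVec_pos hw
        simpa using this
      set β : ℝ := ((p - x₀) ⬝ᵥ A *ᵥ w) / (w ⬝ᵥ A *ᵥ w) with hβ_def
      have hb_eq : (p - x₀) ⬝ᵥ A *ᵥ w = β * (w ⬝ᵥ A *ᵥ w) := by
        rw [hβ_def]; field_simp
      set D : ℝ := Real.sqrt (β ^ 2 + 1) with hD_def
      have hD2 : D ^ 2 = β ^ 2 + 1 := Real.sq_sqrt (by positivity)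
      have hβD : |β| < D := by
        have h1 : |β| = Real.sqrt (β ^ 2) := (Real.sqrt_sq_eq_abs β).symm
        rw [h1, hD_def]
        exact Real.sqrt_lt_sqrt (by positivity) (by linarith)
      obtain ⟨hβD1, hβD2⟩ := abs_lt.mp hβD
      set t : ℝ := D - β with ht_def
      set s : ℝ := D + β with hs_def
      have ht : 0 < t := by rw [ht_def]; linarith
      have hs : 0 < s := by rw [hs_def]; linarith
      have hst : s * t = 1 := by rw [hs_def, ht_def]; linear_combination hD2
      set lam₀ : ℝ := s / (s + t) with hlam₀_def
      have hsum_st : 0 < s + t := by linarith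
      have hlam₀ : 0 < lam₀ := div_pos hs hsum_st
      have hlam₀' : lam₀ < 1 := by
        rw [hlam₀_def, div_lt_one hsum_st]; linarith
      have hmix : lam₀ * t - (1 - lam₀) * s = 0 := by
        rw [hlam₀_def]; field_simp; ring
      have hmix2 : lam₀ * t ^ 2 + (1 - lam₀) * s ^ 2 = 1 := by
        rw [hlam₀_def]; field_simp; nlinarith [hst, hsum_st]
      have key : ∀ r : ℝ, r ^ 2 + 2 * β * r - 1 = 0 →
          ((p + r • w) - x₀) ⬝ᵥ A *ᵥ ((p + r • w) - x₀)
            = (p - x₀) ⬝ᵥ A *ᵥ (p - x₀) + w ⬝ᵥ A *ᵥ w := by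
        intro r hr
        have harr : (p + r • w) - x₀ = (p - x₀) + r • w := by abel
        rw [harr, quad_expand hAs]
        linear_combination (w ⬝ᵥ A *ᵥ w) * hr + 2 * r * hb_eq
      have hroot_t : t ^ 2 + 2 * β * t - 1 = 0 := by
        rw [ht_def]; linear_combination hD2
      have hroot_s : (-s) ^ 2 + 2 * β * (-s) - 1 = 0 := by
        rw [hs_def]; linear_combination hD2
      have hbt : ((p + t • w) - x₀) ⬝ᵥ A *ᵥ ((p + t • w) - x₀)
          + (L.map fun w => w ⬝ᵥ A *ᵥ w).sum ≤ ρ := by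
        rw [key t hroot_t]; linarith
      have hps : p - s • w = p + (-s) • w := by
        ext j; simp; ring
      have hbs : ((p - s • w) - x₀) ⬝ᵥ A *ᵥ ((p - s • w) - x₀)
          + (L.map fun w => w ⬝ᵥ A *ᵥ w).sum ≤ ρ := by
        rw [hps, key (-s) hroot_s]; linarith
      clear_value β D t s lam₀
      obtain ⟨r₁, u₁, lam₁, m1, p1, s1, mean1, mom1⟩ := ih (p + t • w) hbt
      obtain ⟨r₂, u₂, lam₂, m2, p2, s2, mean2, mom2⟩ := ih (p - s • w) hbs
      refine ⟨r₁ + r₂, Fin.append u₁ u₂,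
        Fin.append (fun i => lam₀ * lam₁ i) (fun i => (1 - lam₀) * lam₂ i), ?_, ?_, ?_, ?_, ?_⟩
      · intro i
        refine Fin.addCases (fun i => ?_) (fun i => ?_) i
        · rw [Fin.append_left]; exact m1 i
        · rw [Fin.append_right]; exact m2 i
      · intro i
        refine Fin.addCases (fun i => ?_) (fun i => ?_) i
        · rw [Fin.append_left]; exact mul_pos hlam₀ (p1 i)
        · rw [Fin.append_right]; exact mul_pos (by linarith) (p2 i)
      · rw [Fin.sum_univ_add]
        simp only [Fin.append_left, Fin.append_right, ← Finset.mul_sum, s1, s2]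
        ring
      · rw [Fin.sum_univ_add]
        simp only [Fin.append_left, Fin.append_right, mul_smul, ← Finset.smul_sum, mean1, mean2]
        ext j
        simp only [Pi.add_apply, Pi.smul_apply, Pi.sub_apply, smul_eq_mul]
        linear_combination w j * hmix
      · rw [Fin.sum_univ_add]
        simp only [Fin.append_left, Fin.append_right, mul_smul, ← Finset.smul_sum, mom1, mom2]
        ext i j
        simp only [Matrix.add_apply, Matrix.smul_apply, vecMulVec_apply, Pi.add_apply,
          Pi.sub_apply, Pi.smul_apply, smul_eq_mul]
        linear_combination (p i * w j + w i * p j) * hmix + (w i * w j) * hmix2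
          + ((List.map (fun w => vecMulVec w w) L).sum i j) * (by ring : lam₀ + (1 - lam₀) - 1 = (0:ℝ))

lemma q_expand {n : ℕ} (c : ℝ) (d : Fin n → ℝ) {Q : Matrix (Fin n) (Fin n) ℝ} (hQ : Q.IsSymm)
    (p v : Fin n → ℝ) (r : ℝ) :
    c + d ⬝ᵥ (p + r • v) + (p + r • v) ⬝ᵥ Q *ᵥ (p + r • v)
      = (c + d ⬝ᵥ p + p ⬝ᵥ Q *ᵥ p) + r * (d ⬝ᵥ v + 2 * (p ⬝ᵥ Q *ᵥ v))
        + r ^ 2 * (v ⬝ᵥ Q *ᵥ v) := by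
  rw [quad_expand hQ]
  simp only [dotProduct_add, dotProduct_smul, smul_eq_mul]
  ring

lemma negQ_posDef {n : ℕ} (c : ℝ) (d : Fin n → ℝ) (Q : Matrix (Fin n) (Fin n) ℝ)
    (hQ : Q.IsSymm) (S : Set (Fin n → ℝ))
    (hS : S = {x | 0 ≤ c + d ⬝ᵥ x + x ⬝ᵥ Q.mulVec x})
    (hSne : S.Nonempty) (hScpt : IsCompact S) : (-Q).PosDef := by
  refine Matrix.PosDef.of_dotProduct_mulVec_pos ?_ ?_
  · rw [Matrix.IsHermitian]
    ext i j
    rw [Matrix.conjTranspose_apply, star_trivial, Matrix.neg_apply, Matrix.neg_apply,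
      hQ.apply i j]
  · intro v hv
    have hvlt : v ⬝ᵥ Q *ᵥ v < 0 := by
      by_contra hge
      push_neg at hge
      obtain ⟨p₀, hp₀⟩ := hSne
      have hq₀ : 0 ≤ c + d ⬝ᵥ p₀ + p₀ ⬝ᵥ Q *ᵥ p₀ := by rw [hS] at hp₀; exact hp₀
      obtain ⟨C, hC⟩ := isBounded_iff_forall_norm_le.mp hScpt.isBounded
      have hC0 : ‖p₀‖ ≤ C := hC p₀ hp₀
      set b : ℝ := d ⬝ᵥ v + 2 * (p₀ ⬝ᵥ Q *ᵥ v) with hbdef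
      set σ : ℝ := if 0 ≤ b then 1 else -1 with hσdef
      have hσb : 0 ≤ σ * b := by
        rw [hσdef]; split_ifs with h
        · simpa using h
        · push_neg at h; nlinarith
      have hσ1 : |σ| = 1 := by
        rw [hσdef]; split_ifs <;> simp
      have hvn : 0 < ‖v‖ := norm_pos_iff.mpr hv
      set t : ℝ := (C + ‖p₀‖ + 1) / ‖v‖ with htdef
      have ht : 0 < t := by
        apply div_pos _ hvn; linarith [norm_nonneg p₀]
      set z : Fin n → ℝ := p₀ + (σ * t) • v with hzdef
      have hzS : z ∈ S := by
        rw [hS]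
        show 0 ≤ c + d ⬝ᵥ z + z ⬝ᵥ Q *ᵥ z
        rw [hzdef, q_expand c d hQ]
        have h1 : 0 ≤ σ * t * b := by
          have : σ * t * b = t * (σ * b) := by ring
          rw [this]; exact mul_nonneg ht.le hσb
        rw [← hbdef]
        nlinarith [mul_nonneg (sq_nonneg (σ * t)) hge, h1, hq₀]
      have hzC : ‖z‖ ≤ C := hC z hzS
      have htri : ‖(σ * t) • v‖ ≤ ‖z‖ + ‖p₀‖ := by
        have : (σ * t) • v = z - p₀ := by rw [hzdef]; abel
        rw [this]
        exact norm_sub_le _ _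
      have hnorm : ‖(σ * t) • v‖ = t * ‖v‖ := by
        rw [norm_smul, Real.norm_eq_abs, abs_mul, hσ1, one_mul, abs_of_pos ht]
      have htv : t * ‖v‖ = C + ‖p₀‖ + 1 := by
        rw [htdef]; field_simp
      rw [hnorm, htv] at htri
      linarith
    show 0 < star v ⬝ᵥ (-Q) *ᵥ v
    rw [star_trivial, Matrix.neg_mulVec, dotProduct_neg]
    linarith

/-- Frobenius inner product `A • B = trace(AB)`. -/
noncomputable def frob {n : ℕ} (A B : Matrix (Fin n) (Fin n) ℝ) : ℝ := (A * B).trace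

/-- The moment matrix `[[1, xᵀ],[x, X]]`. -/
def momMat {n : ℕ} (x : Fin n → ℝ) (X : Matrix (Fin n) (Fin n) ℝ) :
    Matrix (Fin 1 ⊕ Fin n) (Fin 1 ⊕ Fin n) ℝ :=
  Matrix.fromBlocks 1 (Matrix.replicateRow (Fin 1) x) (Matrix.replicateCol (Fin 1) x) X

lemma frob_vecMulVec {n : ℕ} (Q : Matrix (Fin n) (Fin n) ℝ) (w : Fin n → ℝ) :
    frob Q (vecMulVec w w) = w ⬝ᵥ Q *ᵥ w := by
  rw [frob, Matrix.trace]
  simp only [Matrix.diag_apply, Matrix.mul_apply, vecMulVec_apply, dotProduct, mulVec]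
  refine Finset.sum_congr rfl fun i _ => ?_
  simp only [dotProduct, Finset.mul_sum]
  refine Finset.sum_congr rfl fun j _ => by ring

lemma frob_add_right {n : ℕ} (Q M N : Matrix (Fin n) (Fin n) ℝ) :
    frob Q (M + N) = frob Q M + frob Q N := by
  simp [frob, Matrix.mul_add]

lemma frob_sum_right {n : ℕ} (Q : Matrix (Fin n) (Fin n) ℝ) {m : ℕ}
    (f : Fin m → Matrix (Fin n) (Fin n) ℝ) :
    frob Q (∑ j, f j) = ∑ j, frob Q (f j) := by
  simp [frob, Matrix.mul_sum]

theorem stmt0 {n : ℕ} (c : ℝ) (d : Fin n → ℝ) (Q : Matrix (Fin n) (Fin n) ℝ)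
    (hQ : Q.IsSymm)
    (S : Set (Fin n → ℝ))
    (hS : S = {x | 0 ≤ c + d ⬝ᵥ x + x ⬝ᵥ Q.mulVec x})
    (hSne : S.Nonempty) (hScpt : IsCompact S)
    (x : Fin n → ℝ) (X : Matrix (Fin n) (Fin n) ℝ) (hX : X.IsSymm)
    (hpsd : (momMat x X).PosSemidef)
    (hineq : 0 ≤ c + d ⬝ᵥ x + frob Q X) :
    ∃ (r : ℕ) (u : Fin r → Fin n → ℝ) (lam : Fin r → ℝ),
      (∀ i, u i ∈ S) ∧ (∀ i, 0 < lam i) ∧ (∑ i, lam i = 1) ∧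
      x = ∑ i, lam i • u i ∧ X = ∑ i, lam i • Matrix.vecMulVec (u i) (u i) := by
  set A : Matrix (Fin n) (Fin n) ℝ := -Q with hAdef
  have hA : A.PosDef := negQ_posDef c d Q hQ S hS hSne hScpt
  have hAs : A.IsSymm := isSymm_of_posdef hA
  have hQA : ∀ v w : Fin n → ℝ, v ⬝ᵥ Q *ᵥ w = -(v ⬝ᵥ A *ᵥ w) := by
    intro v w
    rw [hAdef, Matrix.neg_mulVec, dotProduct_neg, neg_neg]
  have hdet : IsUnit A.det := isUnit_iff_ne_zero.mpr hA.det_pos.ne'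
  set x₀ : Fin n → ℝ := (2:ℝ)⁻¹ • (A⁻¹ *ᵥ d) with hx₀def
  have hAx₀ : A *ᵥ x₀ = (2:ℝ)⁻¹ • d := by
    rw [hx₀def, mulVec_smul, mulVec_mulVec, Matrix.mul_nonsing_inv _ hdet, one_mulVec]
  set ρ : ℝ := c + x₀ ⬝ᵥ A *ᵥ x₀ with hρdef
  have keyId : ∀ u : Fin n → ℝ,
      c + d ⬝ᵥ u + u ⬝ᵥ Q *ᵥ u = ρ - (u - x₀) ⬝ᵥ A *ᵥ (u - x₀) := by
    intro u
    have hsub : u - x₀ = u + (-1 : ℝ) • x₀ := by ext j; simp [sub_eq_add_neg]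
    have e1 : (u - x₀) ⬝ᵥ A *ᵥ (u - x₀)
        = u ⬝ᵥ A *ᵥ u + 2 * (-1) * (u ⬝ᵥ A *ᵥ x₀) + (-1)^2 * (x₀ ⬝ᵥ A *ᵥ x₀) := by
      rw [hsub, quad_expand hAs]
    have e2 : u ⬝ᵥ A *ᵥ x₀ = 2⁻¹ * (d ⬝ᵥ u) := by
      rw [hAx₀, dotProduct_smul, smul_eq_mul, dotProduct_comm]
    rw [hQA, hρdef, e1, e2]
    ring
  have Smem : ∀ u : Fin n → ℝ, u ∈ S ↔ (u - x₀) ⬝ᵥ A *ᵥ (u - x₀) ≤ ρ := by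
    intro u
    rw [hS, Set.mem_setOf_eq, keyId u]
    constructor <;> intro h <;> linarith
  -- Schur complement
  set W : Matrix (Fin n) (Fin n) ℝ := X - vecMulVec x x with hWdef
  have hWps : W.PosSemidef := by
    have h1 : momMat x X
        = Matrix.fromBlocks 1 (Matrix.replicateRow (Fin 1) x) ((Matrix.replicateRow (Fin 1) x)ᴴ) X := by
      rw [momMat, Matrix.conjTranspose_replicateRow]
      rfl
    haveI : Invertible (1 : Matrix (Fin 1) (Fin 1) ℝ) := invertibleOne
    have h2 := (Matrix.PosDef.fromBlocks₁₁ (Matrix.replicateRow (Fin 1) x) X Matrix.PosDef.one).mp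
      (h1 ▸ hpsd)
    have h3 : (Matrix.replicateRow (Fin 1) x)ᴴ * (1 : Matrix (Fin 1) (Fin 1) ℝ)⁻¹ * Matrix.replicateRow (Fin 1) x
        = vecMulVec x x := by
      rw [inv_one, Matrix.mul_one, Matrix.conjTranspose_replicateRow, star_trivial]
      exact (Matrix.vecMulVec_eq (Fin 1) x x).symm
    rw [hWdef, ← h3]
    exact h2
  open scoped MatrixOrder in
  set B : Matrix (Fin n) (Fin n) ℝ := CFC.sqrt W with hBdef
  have hBB : B * B = W := by
    open scoped MatrixOrder in exact CFC.sqrt_mul_sqrt_self W hWps.nonneg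
  have hBsym : ∀ i j, B i j = B j i := by
    intro i j
    open scoped MatrixOrder in
    have h := (CFC.sqrt_nonneg W).posSemidef.isHermitian.apply i j
    rw [hBdef, ← h]
    exact (star_trivial _).symm
  have hsumW : ∑ j, vecMulVec (fun i => B i j) (fun i => B i j) = W := by
    ext i k
    rw [Matrix.sum_apply]
    simp only [vecMulVec_apply]
    rw [← hBB, Matrix.mul_apply]
    exact Finset.sum_congr rfl fun j _ => by rw [hBsym k j]
  have hXdec : X = vecMulVec x x + W := by rw [hWdef]; abel
  -- the list
  set L : List (Fin n → ℝ) := List.ofFn (fun j : Fin n => fun i => B i j) with hLdef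
  have hL1 : (L.map fun w => vecMulVec w w).sum
      = ∑ j, vecMulVec (fun i => B i j) (fun i => B i j) := by
    rw [hLdef, List.map_ofFn, List.sum_ofFn]
    rfl
  have hL2 : (L.map fun w => w ⬝ᵥ A *ᵥ w).sum
      = ∑ j, (fun i => B i j) ⬝ᵥ A *ᵥ (fun i => B i j) := by
    rw [hLdef, List.map_ofFn, List.sum_ofFn]
    rfl
  -- frobenius computation
  have hfrob : frob Q X = x ⬝ᵥ Q *ᵥ x + ∑ j, (fun i => B i j) ⬝ᵥ Q *ᵥ (fun i => B i j) := by
    rw [hXdec, ← hsumW, frob_add_right, frob_vecMulVec, frob_sum_right]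
    congr 1
    exact Finset.sum_congr rfl fun j _ => frob_vecMulVec Q _
  have hbudget : (x - x₀) ⬝ᵥ A *ᵥ (x - x₀) + (L.map fun w => w ⬝ᵥ A *ᵥ w).sum ≤ ρ := by
    rw [hL2]
    have h5 : c + d ⬝ᵥ x + frob Q X
        = (ρ - (x - x₀) ⬝ᵥ A *ᵥ (x - x₀))
          - ∑ j, (fun i => B i j) ⬝ᵥ A *ᵥ (fun i => B i j) := by
      rw [hfrob, ← keyId x]
      have : ∑ j, (fun i => B i j) ⬝ᵥ Q *ᵥ (fun i => B i j)
          = -∑ j, (fun i => B i j) ⬝ᵥ A *ᵥ (fun i => B i j) := by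
        rw [← Finset.sum_neg_distrib]
        exact Finset.sum_congr rfl fun j _ => hQA _ _
      rw [this]
      ring
    rw [h5] at hineq
    linarith
  obtain ⟨r, u, lam, hmem, hpos, hsum1, hmean, hmom⟩ := rep_lemma A hA x₀ ρ L x hbudget
  refine ⟨r, u, lam, fun i => (Smem (u i)).mpr (hmem i), hpos, hsum1, hmean.symm, ?_⟩
  rw [hmom, hL1, hsumW, ← hXdec]
end

section
/- Let A₁,…,A_m, B₁, B₂ be real symmetric n×n matrices and c₁, c₂ ∈ ℝ. Suppose T = {x ∈ ℝⁿ : xᵀB₁x = c₁, xᵀB₂x = c₂} is nonempty and there exist μ₁, μ₂ ∈ ℝ with μ₁B₁ + μ₂B₂ ≺ 0. Then conv{(xᵀA₁x,…,xᵀA_mx) : x ∈ T} = {(A₁•X,…,A_m•X) : X ⪰ 0, B₁•X = c₁, B₂•X = c₂}. -/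
open Matrix Set

namespace Stmt5Aux

variable {n : ℕ}

abbrev V (n : ℕ) := Fin n → ℝ

noncomputable def sq (v : V n) : Matrix (Fin n) (Fin n) ℝ := vecMulVec v v

noncomputable def qf (B : Matrix (Fin n) (Fin n) ℝ) (x : V n) : ℝ := x ⬝ᵥ B.mulVec x

lemma frob_add (B X Y : Matrix (Fin n) (Fin n) ℝ) : frob B (X + Y) = frob B X + frob B Y := by
  simp [frob, mul_add]

lemma frob_zero (B : Matrix (Fin n) (Fin n) ℝ) : frob B (0 : Matrix (Fin n) (Fin n) ℝ) = 0 := by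
  simp [frob]

lemma frob_smul (B X : Matrix (Fin n) (Fin n) ℝ) (r : ℝ) : frob B (r • X) = r * frob B X := by
  simp [frob, Matrix.mul_smul]

lemma frob_sq (B : Matrix (Fin n) (Fin n) ℝ) (x : V n) : frob B (sq x) = qf B x := by
  simp only [frob, sq, qf, Matrix.trace, Matrix.diag, Matrix.mul_apply, vecMulVec_apply,
    dotProduct, Matrix.mulVec, Finset.mul_sum]
  refine Finset.sum_congr rfl fun i _ => Finset.sum_congr rfl fun j _ => by ring

lemma qf_smul (B : Matrix (Fin n) (Fin n) ℝ) (a : ℝ) (x : V n) :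
    qf B (a • x) = a ^ 2 * qf B x := by
  simp [qf, Matrix.mulVec_smul, dotProduct_smul, smul_dotProduct]
  ring

lemma qf_add_smul (B₁ B₂ : Matrix (Fin n) (Fin n) ℝ) (a b : ℝ) (x : V n) :
    qf (a • B₁ + b • B₂) x = a * qf B₁ x + b * qf B₂ x := by
  simp [qf, Matrix.add_mulVec, Matrix.smul_mulVec, dotProduct_add, dotProduct_smul]

lemma qf_sub_smul (B₁ B₂ : Matrix (Fin n) (Fin n) ℝ) (a b : ℝ) (x : V n) :
    qf (a • B₁ - b • B₂) x = a * qf B₁ x - b * qf B₂ x := by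
  simp [qf, Matrix.sub_mulVec, Matrix.smul_mulVec, dotProduct_sub, dotProduct_smul]

lemma frob_sub_smul (B₁ B₂ X : Matrix (Fin n) (Fin n) ℝ) (a b : ℝ) :
    frob (a • B₁ - b • B₂) X = a * frob B₁ X - b * frob B₂ X := by
  simp [frob, Matrix.sub_mul, Matrix.smul_mul]

lemma frob_add_smul (B₁ B₂ X : Matrix (Fin n) (Fin n) ℝ) (a b : ℝ) :
    frob (a • B₁ + b • B₂) X = a * frob B₁ X + b * frob B₂ X := by
  simp [frob, Matrix.add_mul, Matrix.smul_mul]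

lemma frob_list_sum (B : Matrix (Fin n) (Fin n) ℝ) (l : List (Matrix (Fin n) (Fin n) ℝ)) :
    frob B l.sum = (l.map (frob B)).sum := by
  induction l with
  | nil => simp [frob_zero]
  | cons h t ih => simp [frob_add, ih]

lemma sq_zero : sq (0 : V n) = 0 := by
  ext i j; simp [sq, vecMulVec_apply]

lemma decomp {X : Matrix (Fin n) (Fin n) ℝ} (hX : X.PosSemidef) :
    ∃ l : List (V n), (l.map sq).sum = X := by
  obtain ⟨A, rfl⟩ : ∃ A : Matrix (Fin n) (Fin n) ℝ, X = Aᴴ * A := by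
    open scoped MatrixOrder in exact CStarAlgebra.nonneg_iff_eq_star_mul_self.mp hX.nonneg
  refine ⟨(List.finRange n).map (fun k => A k), ?_⟩
  have : ∀ (l : List (Matrix (Fin n) (Fin n) ℝ)) (i j : Fin n),
      l.sum i j = (l.map (fun M => M i j)).sum := by
    intro l i j
    induction l with
    | nil => simp
    | cons h t ih => simp [Matrix.add_apply, ih]
  ext i j
  rw [this, Matrix.mul_apply, Fin.sum_univ_def]
  rw [List.map_map, List.map_map]
  refine congrArg List.sum (List.map_congr_left fun k _ => ?_)
  simp [sq, vecMulVec_apply, Matrix.conjTranspose_apply, mul_comm]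

lemma qf_cont (B : Matrix (Fin n) (Fin n) ℝ) : Continuous (qf B) := by
  unfold qf dotProduct Matrix.mulVec
  exact continuous_finset_sum _ fun i _ => (continuous_apply i).mul
    (continuous_finset_sum _ fun j _ => continuous_const.mul (continuous_apply j))

lemma rotate' (D : Matrix (Fin n) (Fin n) ℝ) (p q : V n) (h : qf D p * qf D q < 0) :
    ∃ x y : V n, sq x + sq y = sq p + sq q ∧ qf D x = 0 := by
  set g : ℝ → ℝ := fun θ => qf D (Real.cos θ • p + Real.sin θ • q) with hg
  have hgc : Continuous g :=
    (qf_cont D).comp ((Real.continuous_cos.smul continuous_const).add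
      (Real.continuous_sin.smul continuous_const))
  have h0 : g 0 = qf D p := by simp [hg]
  have h1 : g (Real.pi / 2) = qf D q := by simp [hg]
  have hpi : (0:ℝ) ≤ Real.pi / 2 := by positivity
  have : ∃ θ ∈ Set.Icc 0 (Real.pi / 2), g θ = 0 := by
    rcases mul_neg_iff.mp h with ⟨ha, hb⟩ | ⟨ha, hb⟩
    · have := intermediate_value_Icc' hpi hgc.continuousOn (a := 0)
        (by rw [h0, h1]; exact ⟨le_of_lt hb, le_of_lt ha⟩)
      exact this.imp fun θ ht => ⟨ht.1, ht.2⟩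
    · have := intermediate_value_Icc hpi hgc.continuousOn (a := 0)
        (by rw [h0, h1]; exact ⟨le_of_lt ha, le_of_lt hb⟩)
      exact this.imp fun θ ht => ⟨ht.1, ht.2⟩
  obtain ⟨θ, _, hθ⟩ := this
  refine ⟨Real.cos θ • p + Real.sin θ • q, (-Real.sin θ) • p + Real.cos θ • q, ?_, hθ⟩
  ext i j
  simp only [sq, Matrix.add_apply, vecMulVec_apply, Pi.add_apply, Pi.smul_apply, smul_eq_mul]
  linear_combination (p i * p j + q i * q j) * (Real.sin_sq_add_cos_sq θ)

lemma reduce (D : Matrix (Fin n) (Fin n) ℝ) : ∀ (k : ℕ) (vs : List (V n)),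
    (vs.filter (fun v => decide (qf D v ≠ 0))).length ≤ k → (vs.map (qf D)).sum = 0 →
    ∃ ws : List (V n), (ws.map sq).sum = (vs.map sq).sum ∧ ∀ w ∈ ws, qf D w = 0 := by
  intro k
  induction k with
  | zero =>
    intro vs hlen _
    refine ⟨vs, rfl, fun w hw => ?_⟩
    have : vs.filter (fun v => decide (qf D v ≠ 0)) = [] :=
      List.length_eq_zero_iff.mp (Nat.le_zero.mp hlen)
    have := List.filter_eq_nil_iff.mp this w hw
    simpa using this
  | succ k ih =>
    intro vs hlen hsum
    by_cases hall : ∀ v ∈ vs, qf D v = 0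
    · exact ⟨vs, rfl, hall⟩
    push_neg at hall
    obtain ⟨p, hp, hp0⟩ := hall
    set P : V n → Bool := fun v => decide (qf D v ≠ 0) with hP
    have hperm1 : vs.Perm (p :: vs.erase p) := List.perm_cons_erase hp
    have hsum1 : (vs.map (qf D)).sum = qf D p + ((vs.erase p).map (qf D)).sum := by
      rw [(hperm1.map (qf D)).sum_eq]; simp
    have hq : ∃ q ∈ vs.erase p, qf D q * qf D p < 0 := by
      by_contra hcon
      push_neg at hcon
      have h1 : 0 ≤ ((vs.erase p).map (fun v => qf D v * qf D p)).sum :=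
        List.sum_nonneg (by
          intro x hx
          obtain ⟨q, hq, rfl⟩ := List.mem_map.mp hx
          exact hcon q hq)
      rw [List.sum_map_mul_right] at h1
      have h2 : ((vs.erase p).map (qf D)).sum = -qf D p := by linarith [hsum1, hsum]
      rw [h2] at h1
      nlinarith [mul_self_pos.mpr hp0]
    obtain ⟨q, hqmem, hq0⟩ := hq
    have hq0' : qf D q ≠ 0 := fun h => by simp [h] at hq0
    obtain ⟨x, y, hxy, hx0⟩ := rotate' D p q (by nlinarith)
    set l'' := (vs.erase p).erase q with hl''
    have hperm2 : (vs.erase p).Perm (q :: l'') := List.perm_cons_erase hqmem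
    have hperm : vs.Perm (p :: q :: l'') := hperm1.trans (hperm2.cons p)
    have hfxy : ∀ B : Matrix (Fin n) (Fin n) ℝ, qf B x + qf B y = qf B p + qf B q := by
      intro B
      have := congrArg (frob B) hxy
      rwa [frob_add, frob_add, frob_sq, frob_sq, frob_sq, frob_sq] at this
    have hnewsum : ((x :: y :: l'').map (qf D)).sum = 0 := by
      have := (hperm.map (qf D)).sum_eq
      simp only [List.map_cons, List.sum_cons] at this ⊢
      rw [hsum] at this
      have h2 := hfxy D
      linarith
    have hnewlen : ((x :: y :: l'').filter P).length ≤ k := by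
      have hfl : (vs.filter P).Perm ((p :: q :: l'').filter P) := hperm.filter P
      have hPp : P p = true := by simp [hP, hp0]
      have hPq : P q = true := by simp [hP, hq0']
      have hlen2 : (vs.filter P).length = 2 + (l''.filter P).length := by
        rw [hfl.length_eq]
        simp [List.filter_cons, hPp, hPq]
        omega
      have hx0' : P x = false := by simp [hP, hx0]
      have : (l''.filter P).length + 2 ≤ k + 1 := by omega
      simp only [List.filter_cons, hx0']
      by_cases hPy : P y = true <;> simp [hPy] <;> omega
    obtain ⟨ws, hws1, hws2⟩ := ih (x :: y :: l'') hnewlen hnewsum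
    refine ⟨ws, ?_, hws2⟩
    rw [hws1, (hperm.map sq).sum_eq]
    simp only [List.map_cons, List.sum_cons, ← add_assoc, hxy]

lemma qf_list_sum (B : Matrix (Fin n) (Fin n) ℝ) (l : List (V n)) :
    frob B (l.map sq).sum = (l.map (qf B)).sum := by
  rw [frob_list_sum, List.map_map]
  congr 1
  exact List.map_congr_left fun v _ => frob_sq B v

lemma filter_nonzero_sq (l : List (V n)) :
    ((l.filter (fun v => !decide (v = 0))).map sq).sum = (l.map sq).sum := by
  induction l with
  | nil => simp
  | cons h t ih =>
    by_cases hh : h = 0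
    · subst hh
      simp [List.filter_cons, sq_zero, ih]
    · simp [List.filter_cons, hh, ih]

lemma key (B₁ B₂ : Matrix (Fin n) (Fin n) ℝ) (c₁ c₂ μ₁ μ₂ : ℝ)
    (hneg : ∀ x : V n, x ≠ 0 → qf (μ₁ • B₁ + μ₂ • B₂) x < 0)
    (hc : μ₁ * c₁ + μ₂ * c₂ < 0)
    (X : Matrix (Fin n) (Fin n) ℝ) (hX : X.PosSemidef)
    (h1 : frob B₁ X = c₁) (h2 : frob B₂ X = c₂) :
    ∃ l : List (V n × ℝ),
      (∀ pr ∈ l, 0 < pr.2 ∧ qf B₁ pr.1 = c₁ ∧ qf B₂ pr.1 = c₂) ∧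
      (l.map Prod.snd).sum = 1 ∧ (l.map (fun pr => pr.2 • sq pr.1)).sum = X := by
  set c : ℝ := μ₁ * c₁ + μ₂ * c₂ with hcdef
  have hc0 : c ≠ 0 := ne_of_lt hc
  set D : Matrix (Fin n) (Fin n) ℝ := c₂ • B₁ - c₁ • B₂ with hDdef
  set M : Matrix (Fin n) (Fin n) ℝ := μ₁ • B₁ + μ₂ • B₂ with hMdef
  obtain ⟨vs, hvs⟩ := decomp hX
  have hsum0 : (vs.map (qf D)).sum = 0 := by
    rw [← qf_list_sum, hvs, hDdef, frob_sub_smul, h1, h2]; ring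
  obtain ⟨ws, hws, hwd⟩ := reduce D (vs.filter (fun v => decide (qf D v ≠ 0))).length vs le_rfl hsum0
  have hwsX : (ws.map sq).sum = X := hws.trans hvs
  set zs : List (V n) := ws.filter (fun v => !decide (v = 0)) with hzsdef
  have hzsX : (zs.map sq).sum = X := (filter_nonzero_sq ws).trans hwsX
  have hz : ∀ z ∈ zs, z ≠ 0 ∧ qf D z = 0 := by
    intro z hzm
    rw [hzsdef, List.mem_filter] at hzm
    exact ⟨by simpa using hzm.2, hwd z hzm.1⟩
  set t : V n → ℝ := fun z => (μ₁ * qf B₁ z + μ₂ * qf B₂ z) / c with htdef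
  have htc : ∀ z, t z * c = qf M z := by
    intro z
    rw [htdef, hMdef, qf_add_smul, div_mul_cancel₀ _ hc0]
  have hzfacts : ∀ z ∈ zs, 0 < t z ∧ qf B₁ z = t z * c₁ ∧ qf B₂ z = t z * c₂ := by
    intro z hzm
    obtain ⟨hz0, hzD⟩ := hz z hzm
    have hMz : qf M z < 0 := hneg z hz0
    have hnum : μ₁ * qf B₁ z + μ₂ * qf B₂ z < 0 := by
      rw [hMdef, qf_add_smul] at hMz; exact hMz
    have ht : 0 < t z := div_pos_of_neg_of_neg hnum hc
    have hd : c₂ * qf B₁ z - c₁ * qf B₂ z = 0 := by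
      rw [← qf_sub_smul, ← hDdef]; exact hzD
    refine ⟨ht, ?_, ?_⟩
    · rw [htdef]
      rw [div_mul_eq_mul_div, eq_div_iff hc0, hcdef]
      linear_combination μ₂ * hd
    · rw [htdef]
      rw [div_mul_eq_mul_div, eq_div_iff hc0, hcdef]
      linear_combination (-μ₁) * hd
  set xx : V n → V n := fun z => (Real.sqrt (t z))⁻¹ • z with hxxdef
  have hxq : ∀ z ∈ zs, ∀ B : Matrix (Fin n) (Fin n) ℝ, qf B (xx z) = (t z)⁻¹ * qf B z := by
    intro z hzm B
    have ht := (hzfacts z hzm).1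
    rw [hxxdef]
    simp only
    rw [qf_smul, inv_pow, Real.sq_sqrt (le_of_lt ht)]
  have hsqz : ∀ z ∈ zs, sq z = t z • sq (xx z) := by
    intro z hzm
    have ht := (hzfacts z hzm).1
    have hs : Real.sqrt (t z) * Real.sqrt (t z) = t z := Real.mul_self_sqrt (le_of_lt ht)
    have hs0 : Real.sqrt (t z) ≠ 0 := ne_of_gt (Real.sqrt_pos.mpr ht)
    ext i j
    rw [hxxdef]
    simp only [sq, Matrix.smul_apply, vecMulVec_apply, Pi.smul_apply, smul_eq_mul]
    field_simp
    rw [Real.sq_sqrt (le_of_lt ht)]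
  -- weight sum
  have hMX : frob M X = c := by rw [hMdef, frob_add_smul, h1, h2]
  have htsum : (zs.map t).sum = 1 := by
    have e1 : frob M X = (zs.map (qf M)).sum := by rw [← hzsX, qf_list_sum]
    have e2 : (zs.map (qf M)).sum = (zs.map (fun z => t z * c)).sum := by
      congr 1; exact List.map_congr_left fun z _ => (htc z).symm
    rw [List.sum_map_mul_right] at e2
    have : (zs.map t).sum * c = c := by rw [← e2, ← e1, hMX]
    field_simp at this
    tauto
  refine ⟨zs.map (fun z => (xx z, t z)), ?_, ?_, ?_⟩
  · intro pr hpr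
    rw [List.mem_map] at hpr
    obtain ⟨z, hzm, rfl⟩ := hpr
    obtain ⟨ht, hq1, hq2⟩ := hzfacts z hzm
    refine ⟨ht, ?_, ?_⟩
    · rw [hxq z hzm B₁, hq1, inv_mul_cancel_left₀ (ne_of_gt ht)]
    · rw [hxq z hzm B₂, hq2, inv_mul_cancel_left₀ (ne_of_gt ht)]
  · rw [List.map_map]
    exact htsum
  · rw [List.map_map]
    have : zs.map ((fun pr : V n × ℝ => pr.2 • sq pr.1) ∘ fun z => (xx z, t z)) = zs.map sq := by
      exact List.map_congr_left fun z hzm => ((hsqz z hzm).symm)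
    rw [this, hzsX]

end Stmt5Aux

namespace Stmt5Aux

lemma map_sum_get {γ : Type*} {β : Type*} [AddCommMonoid β] (l : List γ) (f : γ → β) :
    (l.map f).sum = ∑ k : Fin l.length, f (l.get k) := by
  conv_lhs => rw [← List.ofFn_get l]
  rw [List.map_ofFn, List.sum_ofFn]
  simp [Function.comp]

lemma sq_isSymm (x : V n) : (sq x).IsSymm := by
  show (sq x)ᵀ = sq x
  ext i j
  simp [sq, Matrix.transpose_apply, vecMulVec_apply, mul_comm]

lemma sq_posSemidef (x : V n) : (sq x).PosSemidef := by
  simpa [sq] using Matrix.posSemidef_vecMulVec_self_star x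

lemma list_sum_nonpos : ∀ (l : List ℝ), (∀ a ∈ l, a ≤ 0) → l.sum ≤ 0 := by
  intro l
  induction l with
  | nil => simp
  | cons hd t ih =>
    intro h
    rw [List.sum_cons]
    exact add_nonpos (h hd (List.mem_cons_self))
      (ih fun a ha => h a (List.mem_cons_of_mem hd ha))

lemma all_zero_of_nonpos_sum_zero (l : List ℝ) (h : ∀ a ∈ l, a ≤ 0) (hs : l.sum = 0) :
    ∀ a ∈ l, a = 0 := by
  induction l with
  | nil => simp
  | cons hd t ih =>
    have hts : t.sum ≤ 0 := list_sum_nonpos t (fun a ha => h a (List.mem_cons_of_mem hd ha))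
    have hhd : hd ≤ 0 := h hd (List.mem_cons_self)
    simp only [List.sum_cons] at hs
    have hhd0 : hd = 0 := by linarith
    have hts0 : t.sum = 0 := by linarith
    intro a ha
    rcases List.mem_cons.mp ha with rfl | ha
    · exact hhd0
    · exact ih (fun b hb => h b (List.mem_cons_of_mem hd hb)) hts0 a ha

lemma zero_of_frobM_zero (M : Matrix (Fin n) (Fin n) ℝ)
    (hneg : ∀ x : V n, x ≠ 0 → qf M x < 0)
    (X : Matrix (Fin n) (Fin n) ℝ) (hX : X.PosSemidef) (h0 : frob M X = 0) : X = 0 := by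
  obtain ⟨vs, hvs⟩ := decomp hX
  have hsum : (vs.map (qf M)).sum = 0 := by rw [← qf_list_sum, hvs, h0]
  have hle : ∀ a ∈ vs.map (qf M), a ≤ 0 := by
    intro a ha
    obtain ⟨v, _, rfl⟩ := List.mem_map.mp ha
    by_cases hv : v = 0
    · subst hv; simp [qf]
    · exact le_of_lt (hneg v hv)
  have hall := all_zero_of_nonpos_sum_zero _ hle hsum
  have hvz : ∀ v ∈ vs, v = 0 := by
    intro v hv
    by_contra hv0
    exact absurd (hall (qf M v) (List.mem_map_of_mem hv)) (ne_of_lt (hneg v hv0))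
  rw [← hvs]
  have : vs.map sq = vs.map (fun _ => (0 : Matrix (Fin n) (Fin n) ℝ)) :=
    List.map_congr_left fun v hv => by rw [hvz v hv, sq_zero]
  rw [this]
  simp

end Stmt5Aux

open Stmt5Aux in
theorem stmt5 {n m : ℕ} (A : Fin m → Matrix (Fin n) (Fin n) ℝ) (hA : ∀ i, (A i).IsSymm)
    (B₁ B₂ : Matrix (Fin n) (Fin n) ℝ) (hB₁ : B₁.IsSymm) (hB₂ : B₂.IsSymm)
    (c₁ c₂ : ℝ)
    (T : Set (Fin n → ℝ))
    (hT : T = {x | x ⬝ᵥ B₁.mulVec x = c₁ ∧ x ⬝ᵥ B₂.mulVec x = c₂})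
    (hTne : T.Nonempty)
    (μ₁ μ₂ : ℝ)
    (hneg : ∀ x : Fin n → ℝ, x ≠ 0 → x ⬝ᵥ (μ₁ • B₁ + μ₂ • B₂).mulVec x < 0) :
    convexHull ℝ {y : Fin m → ℝ | ∃ x ∈ T, y = fun i => x ⬝ᵥ (A i).mulVec x} =
      {y | ∃ X : Matrix (Fin n) (Fin n) ℝ, X.IsSymm ∧ X.PosSemidef ∧
        frob B₁ X = c₁ ∧ frob B₂ X = c₂ ∧ y = fun i => frob (A i) X} := by
  subst hT
  set M : Matrix (Fin n) (Fin n) ℝ := μ₁ • B₁ + μ₂ • B₂ with hMdef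
  have hnegq : ∀ x : V n, x ≠ 0 → qf M x < 0 := fun x hx => hneg x hx
  set S : Set (Fin m → ℝ) :=
    {y : Fin m → ℝ | ∃ x ∈ {x : V n | x ⬝ᵥ B₁.mulVec x = c₁ ∧ x ⬝ᵥ B₂.mulVec x = c₂},
      y = fun i => x ⬝ᵥ (A i).mulVec x} with hSdef
  set R : Set (Fin m → ℝ) :=
    {y | ∃ X : Matrix (Fin n) (Fin n) ℝ, X.IsSymm ∧ X.PosSemidef ∧
      frob B₁ X = c₁ ∧ frob B₂ X = c₂ ∧ y = fun i => frob (A i) X} with hRdef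
  apply Set.Subset.antisymm
  · -- convexHull S ⊆ R
    apply convexHull_min
    · rintro y ⟨x, ⟨hx1, hx2⟩, rfl⟩
      refine ⟨sq x, sq_isSymm x, sq_posSemidef x, ?_, ?_, ?_⟩
      · rw [frob_sq]; exact hx1
      · rw [frob_sq]; exact hx2
      · funext i; rw [frob_sq]; rfl
    · rintro y₁ ⟨X₁, hs₁, hp₁, hf₁, hg₁, rfl⟩ y₂ ⟨X₂, hs₂, hp₂, hf₂, hg₂, rfl⟩ a b ha hb hab
      refine ⟨a • X₁ + b • X₂, (hs₁.smul a).add (hs₂.smul b), ?_, ?_, ?_, ?_⟩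
      · exact (hp₁.smul ha).add (hp₂.smul hb)
      · rw [frob_add, frob_smul, frob_smul, hf₁, hf₂]; linear_combination c₁ * hab
      · rw [frob_add, frob_smul, frob_smul, hg₁, hg₂]; linear_combination c₂ * hab
      · funext i
        simp only [Pi.add_apply, Pi.smul_apply, smul_eq_mul]
        rw [frob_add, frob_smul, frob_smul]
  · -- R ⊆ convexHull S
    rintro y ⟨X, hsymm, hpsd, hf1, hf2, rfl⟩
    obtain ⟨x₀, hx₀1, hx₀2⟩ := hTne
    by_cases hx₀ : x₀ = 0
    · -- degenerate case : c₁ = c₂ = 0, X = 0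
      subst hx₀
      have hc₁ : c₁ = 0 := by simpa [qf] using hx₀1.symm
      have hc₂ : c₂ = 0 := by simpa [qf] using hx₀2.symm
      have hfM : frob M X = 0 := by
        rw [hMdef, frob_add_smul, hf1, hf2, hc₁, hc₂]; ring
      have hX0 : X = 0 := zero_of_frobM_zero M hnegq X hpsd hfM
      subst hX0
      apply subset_convexHull
      refine ⟨0, ⟨?_, ?_⟩, ?_⟩
      · simp [hc₁]
      · simp [hc₂]
      · funext i; simp [frob_zero]
    · -- main case
      have hqx₀ : qf M x₀ = μ₁ * c₁ + μ₂ * c₂ := by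
        rw [hMdef, qf_add_smul]
        simp only [qf] at *
        rw [hx₀1, hx₀2]
      have hc : μ₁ * c₁ + μ₂ * c₂ < 0 := by rw [← hqx₀]; exact hnegq x₀ hx₀
      obtain ⟨l, hl1, hl2, hl3⟩ := key B₁ B₂ c₁ c₂ μ₁ μ₂ hnegq hc X hpsd hf1 hf2
      have hwnn : ∀ k : Fin l.length, 0 ≤ (l.get k).2 :=
        fun k => le_of_lt (hl1 (l.get k) (List.get_mem l k)).1
      have hwsum : ∑ k : Fin l.length, (l.get k).2 = 1 := by
        rw [← hl2, map_sum_get]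
      have hpts : ∀ k : Fin l.length,
          (fun i => qf (A i) (l.get k).1) ∈ S := by
        intro k
        obtain ⟨_, hq1, hq2⟩ := hl1 (l.get k) (List.get_mem l k)
        exact ⟨(l.get k).1, ⟨hq1, hq2⟩, rfl⟩
      have hy : (fun i => frob (A i) X) =
          ∑ k : Fin l.length, (l.get k).2 • (fun i => qf (A i) (l.get k).1) := by
        funext i
        rw [Finset.sum_apply]
        simp only [Pi.smul_apply, smul_eq_mul]
        rw [← hl3, frob_list_sum, List.map_map, map_sum_get]
        refine Finset.sum_congr rfl fun k _ => ?_
        simp only [Function.comp_apply]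
        rw [frob_smul, frob_sq]
      rw [hy]
      exact (convex_convexHull ℝ S).sum_mem (fun k _ => hwnn k) hwsum (fun k _ => subset_convexHull ℝ S (hpts k))
end

section
/- Consider the SDP min A₀•X subject to X ⪰ 0, B₁•X = c₁, B₂•X = c₂ over symmetric n×n matrices, where A₀, B₁, B₂ are symmetric. If this SDP attains its optimum, then it has an optimal solution X* of rank at most 1; i.e., either X* = 0 or X* = vvᵀ for some nonzero v ∈ ℝⁿ. -/
open Matrix Set

section Helpers


lemma two_by_two (p q a b c : ℝ) (hp : 0 < p) (hq : 0 < q)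
    (hE : ¬(a = 0 ∧ b = 0 ∧ c = 0)) :
    ∃ τ : ℝ, 0 < τ ∧
      (∀ t, |t| ≤ τ → 0 ≤ p + t*a ∧ 0 ≤ q + t*b ∧ (t*c)^2 ≤ (p + t*a)*(q + t*b)) ∧
      ((p + τ*a)*(q + τ*b) = (τ*c)^2 ∨ (p + (-τ)*a)*(q + (-τ)*b) = ((-τ)*c)^2) := by
  set g : ℝ → ℝ := fun t => (p + t*a)*(q + t*b) - (t*c)^2 with hg
  have hgc : Continuous g := by
    apply Continuous.sub
    · exact (continuous_const.add (continuous_id.mul continuous_const)).mul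
        (continuous_const.add (continuous_id.mul continuous_const))
    · exact (continuous_id.mul continuous_const).pow 2
  have step1 : ∃ t₁, g t₁ ≤ 0 := by
    by_cases ha : a = 0
    · by_cases hb : b = 0
      · have hc : c ≠ 0 := fun hc => hE ⟨ha, hb, hc⟩
        refine ⟨Real.sqrt (p*q/c^2), ?_⟩
        have h1 : (Real.sqrt (p*q/c^2))^2 = p*q/c^2 := Real.sq_sqrt (by positivity)
        have h2 : p*q/c^2*c^2 = p*q := by field_simp
        have h3 : (Real.sqrt (p*q/c^2) * c)^2 = p*q := by rw [mul_pow, h1, h2]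
        show (p + Real.sqrt (p*q/c^2)*a)*(q + Real.sqrt (p*q/c^2)*b)
          - (Real.sqrt (p*q/c^2)*c)^2 ≤ 0
        rw [ha, hb, h3]
        ring_nf
        rfl
      · refine ⟨-q/b, ?_⟩
        have h1 : q + (-q/b)*b = 0 := by field_simp; ring
        show (p + _*a)*(q + _*b) - (_*c)^2 ≤ 0
        rw [h1]
        nlinarith [sq_nonneg ((-q/b)*c)]
    · refine ⟨-p/a, ?_⟩
      have h1 : p + (-p/a)*a = 0 := by field_simp; ring
      show (p + _*a)*(q + _*b) - (_*c)^2 ≤ 0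
      rw [h1]
      nlinarith [sq_nonneg ((-p/a)*c)]
  obtain ⟨t₁, ht₁⟩ := step1
  set Bad : Set ℝ := {t | g t ≤ 0 ∨ p + t*a ≤ 0 ∨ q + t*b ≤ 0} with hBad
  have hBadClosed : IsClosed Bad := by
    have e : Bad = g ⁻¹' (Set.Iic 0) ∪ ((fun t => p + t*a) ⁻¹' (Set.Iic 0)
        ∪ (fun t => q + t*b) ⁻¹' (Set.Iic 0)) := by
      ext t; simp only [hBad, Set.mem_setOf_eq, Set.mem_union, Set.mem_preimage, Set.mem_Iic]
    rw [e]
    refine (isClosed_Iic.preimage hgc).union (IsClosed.union ?_ ?_) <;>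
      exact isClosed_Iic.preimage (continuous_const.add (continuous_id.mul continuous_const))
  have ht₁Bad : t₁ ∈ Bad := Or.inl ht₁
  have hKcpt : IsCompact (Set.Icc (-|t₁|) |t₁| ∩ Bad) :=
    (isCompact_Icc).inter_right hBadClosed
  have hKne : (Set.Icc (-|t₁|) |t₁| ∩ Bad).Nonempty :=
    ⟨t₁, ⟨neg_abs_le t₁, le_abs_self t₁⟩, ht₁Bad⟩
  obtain ⟨ts, hts, htsmin⟩ := hKcpt.exists_isMinOn hKne (continuous_abs.continuousOn)
  set τ := |ts| with hτ
  have h0nb : (0:ℝ) ∉ Bad := by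
    simp only [hBad, Set.mem_setOf_eq, hg]
    push_neg
    refine ⟨by nlinarith, by nlinarith, by nlinarith⟩
  have hτpos : 0 < τ := by
    rcases eq_or_ne ts 0 with h | h
    · exact absurd (h ▸ hts.2) h0nb
    · exact abs_pos.mpr h
  have hmin : ∀ t ∈ Bad, τ ≤ |t| := by
    intro t ht
    by_cases hI : t ∈ Set.Icc (-|t₁|) |t₁|
    · exact htsmin ⟨hI, ht⟩
    · have h1 : |t₁| < |t| := by
        rw [Set.mem_Icc, ← abs_le] at hI
        exact lt_of_not_ge hI
      have h2 : τ ≤ |t₁| := htsmin ⟨⟨neg_abs_le t₁, le_abs_self t₁⟩, ht₁Bad⟩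
      linarith
  have hint : ∀ t, |t| < τ → 0 < g t ∧ 0 < p + t*a ∧ 0 < q + t*b := by
    intro t ht
    have : t ∉ Bad := fun h => absurd (hmin t h) (not_le.mpr ht)
    simp only [hBad, Set.mem_setOf_eq, not_or, not_le] at this
    exact ⟨this.1, this.2.1, this.2.2⟩
  have claimA : ∀ t, |t| ≤ τ → 0 ≤ p + t*a := by
    intro t ht
    by_contra hlt
    push_neg at hlt
    have ha : a ≠ 0 := by intro ha0; rw [ha0, mul_zero, add_zero] at hlt; linarith
    set t' := -p/a with ht'
    have h1 : p + t'*a = 0 := by rw [ht']; field_simp; ring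
    have h2 : |t'| < |t| := by
      have h3 : -(t*a) > p := by linarith
      have h4 : |t*a| > p := lt_of_lt_of_le h3 (neg_le_abs _)
      rw [abs_mul] at h4
      rw [ht', abs_div, abs_neg, abs_of_pos hp, div_lt_iff₀ (abs_pos.mpr ha)]
      linarith
    have h5 : g t' ≤ 0 := by
      show (p + t'*a)*(q + t'*b) - (t'*c)^2 ≤ 0
      rw [h1]
      nlinarith [sq_nonneg (t'*c)]
    have := (hint t' (lt_of_lt_of_le h2 ht)).1
    linarith
  have claimA' : ∀ t, |t| ≤ τ → 0 ≤ q + t*b := by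
    intro t ht
    by_contra hlt
    push_neg at hlt
    have hb : b ≠ 0 := by intro hb0; rw [hb0, mul_zero, add_zero] at hlt; linarith
    set t' := -q/b with ht'
    have h1 : q + t'*b = 0 := by rw [ht']; field_simp; ring
    have h2 : |t'| < |t| := by
      have h3 : -(t*b) > q := by linarith
      have h4 : |t*b| > q := lt_of_lt_of_le h3 (neg_le_abs _)
      rw [abs_mul] at h4
      rw [ht', abs_div, abs_neg, abs_of_pos hq, div_lt_iff₀ (abs_pos.mpr hb)]
      linarith
    have h5 : g t' ≤ 0 := by
      show (p + t'*a)*(q + t'*b) - (t'*c)^2 ≤ 0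
      rw [h1]
      nlinarith [sq_nonneg (t'*c)]
    have := (hint t' (lt_of_lt_of_le h2 ht)).1
    linarith
  have claimB : ∀ t, |t| ≤ τ → 0 ≤ g t := by
    intro t ht
    by_contra hlt
    push_neg at hlt
    have hg0 : 0 < g 0 := by
      show 0 < (p + 0*a)*(q + 0*b) - (0*c)^2
      nlinarith
    have htne : t ≠ 0 := by rintro rfl; linarith
    rcases htne.lt_or_gt with hneg | hpos
    · obtain ⟨t'', ht''mem, ht''⟩ := intermediate_value_Ioo (le_of_lt hneg)
        hgc.continuousOn (Set.mem_Ioo.mpr ⟨hlt, hg0⟩)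
      have habs : |t''| < τ := by
        rw [abs_lt]
        refine ⟨lt_of_le_of_lt (neg_le_of_abs_le ht) ht''mem.1, lt_trans ht''mem.2 hτpos⟩
      have := (hint t'' habs).1
      linarith [ht''.le]
    · obtain ⟨t'', ht''mem, ht''⟩ := intermediate_value_Ioo' (le_of_lt hpos)
        hgc.continuousOn (Set.mem_Ioo.mpr ⟨hlt, hg0⟩)
      have habs : |t''| < τ := by
        rw [abs_lt]
        refine ⟨lt_trans (neg_lt_zero.mpr hτpos) ht''mem.1,
          lt_of_lt_of_le ht''mem.2 (le_of_abs_le ht)⟩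
      have := (hint t'' habs).1
      linarith [ht''.le]
  refine ⟨τ, hτpos, ?_, ?_⟩
  · intro t ht
    refine ⟨claimA t ht, claimA' t ht, ?_⟩
    have := claimB t ht
    have : 0 ≤ (p + t*a)*(q + t*b) - (t*c)^2 := this
    linarith
  · have htsτ : |ts| ≤ τ := le_of_eq rfl
    have hA := claimA ts htsτ
    have hA' := claimA' ts htsτ
    have hB : 0 ≤ (p + ts*a)*(q + ts*b) - (ts*c)^2 := claimB ts htsτ
    have hgz : (p + ts*a)*(q + ts*b) - (ts*c)^2 = 0 := by
      rcases hts.2 with h | h | h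
      · have h' : (p + ts*a)*(q + ts*b) - (ts*c)^2 ≤ 0 := h
        linarith
      · have : p + ts*a = 0 := le_antisymm h hA
        nlinarith [sq_nonneg (ts*c)]
      · have : q + ts*b = 0 := le_antisymm h hA'
        nlinarith [sq_nonneg (ts*c)]
    rcases abs_choice ts with h | h
    · left
      rw [hτ, h]
      linarith
    · right
      have h2 : -τ = ts := by rw [hτ]; linarith
      rw [h2]
      linarith



variable {n : ℕ}

lemma spec_sum (X : Matrix (Fin n) (Fin n) ℝ) (hX : X.IsHermitian) :
    X = ∑ m, hX.eigenvalues m •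
      vecMulVec (fun k => (hX.eigenvectorUnitary : Matrix (Fin n) (Fin n) ℝ) k m)
                (fun k => (hX.eigenvectorUnitary : Matrix (Fin n) (Fin n) ℝ) k m) := by
  ext k l
  conv_lhs => rw [hX.spectral_theorem, Unitary.conjStarAlgAut_apply]
  simp only [Matrix.mul_apply, Matrix.diagonal, vecMulVec_apply, Finset.sum_apply,
    Matrix.sum_apply, Matrix.smul_apply, Matrix.of_apply, smul_eq_mul, star_apply,
    Finset.sum_mul, RCLike.star_def, Function.comp]
  rw [Finset.sum_comm]
  apply Finset.sum_congr rfl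
  intro m _
  simp [Finset.sum_ite_eq, starRingEnd_apply]
  ring

lemma real_herm_iff_symm (A : Matrix (Fin n) (Fin n) ℝ) : A.IsHermitian ↔ A.IsSymm := by
  constructor <;> intro h <;> ext i j
  · exact (congrFun (congrFun h i) j : _)
  · exact (congrFun (congrFun h i) j : _)

lemma vecMulVec_symm (v : Fin n → ℝ) : (vecMulVec v v).IsSymm := by
  ext i j; simp [vecMulVec_apply, mul_comm]

lemma cross_symm (u w : Fin n → ℝ) : (vecMulVec u w + vecMulVec w u).IsSymm := by
  ext i j
  simp [vecMulVec_apply, Matrix.transpose_apply]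
  ring

lemma quad_vecMulVec (u w x : Fin n → ℝ) :
    x ⬝ᵥ (vecMulVec u w) *ᵥ x = (u ⬝ᵥ x) * (w ⬝ᵥ x) := by
  have h : (vecMulVec u w) *ᵥ x = (w ⬝ᵥ x) • u := by
    ext k
    simp [mulVec, vecMulVec_apply, dotProduct, Finset.sum_mul, Finset.mul_sum]
    apply Finset.sum_congr rfl
    intros; ring
  rw [h, dotProduct_smul, smul_eq_mul, dotProduct_comm x u]
  ring

lemma psd_add {A B : Matrix (Fin n) (Fin n) ℝ} (hA : A.PosSemidef) (hB : B.PosSemidef) :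
    (A + B).PosSemidef := by
  refine posSemidef_iff_dotProduct_mulVec.mpr ⟨hA.1.add hB.1, fun x => ?_⟩
  rw [add_mulVec, dotProduct_add]
  exact add_nonneg (hA.dotProduct_mulVec_nonneg x) (hB.dotProduct_mulVec_nonneg x)

lemma psd_smul_vmv {c : ℝ} (hc : 0 ≤ c) (v : Fin n → ℝ) : (c • vecMulVec v v).PosSemidef := by
  refine posSemidef_iff_dotProduct_mulVec.mpr ⟨(real_herm_iff_symm _).mpr ?_, fun x => ?_⟩
  · exact (vecMulVec_symm v).smul c
  · simp only [star_trivial, smul_mulVec, dotProduct_smul, quad_vecMulVec, smul_eq_mul]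
    exact mul_nonneg hc (mul_self_nonneg _)

lemma psd_combo (u w : Fin n → ℝ) (p q r : ℝ) (hp : 0 ≤ p) (hq : 0 ≤ q) (hr : r^2 ≤ p*q) :
    (p • vecMulVec u u + q • vecMulVec w w + r • (vecMulVec u w + vecMulVec w u)).PosSemidef := by
  refine posSemidef_iff_dotProduct_mulVec.mpr ⟨(real_herm_iff_symm _).mpr ?_, fun x => ?_⟩
  · exact (((vecMulVec_symm u).smul p).add ((vecMulVec_symm w).smul q)).add
      ((cross_symm u w).smul r)
  · simp only [add_mulVec, dotProduct_add, smul_mulVec, dotProduct_smul,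
      quad_vecMulVec, smul_eq_mul, star_trivial]
    set yu := u ⬝ᵥ x
    set yw := w ⬝ᵥ x
    by_cases hp0 : p = 0
    · have hr0 : r = 0 := by nlinarith [sq_nonneg r]
      rw [hp0, hr0]
      nlinarith [mul_self_nonneg yw]
    · have hppos : 0 < p := lt_of_le_of_ne hp (Ne.symm hp0)
      nlinarith [sq_nonneg (p*yu + r*yw), mul_nonneg (sub_nonneg.mpr hr) (mul_self_nonneg yw),
        mul_self_nonneg yu, mul_self_nonneg yw]

lemma rank_add_le' (A B : Matrix (Fin n) (Fin n) ℝ) : (A + B).rank ≤ A.rank + B.rank := by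
  classical
  unfold Matrix.rank
  have h : LinearMap.range (A + B).mulVecLin ≤
      LinearMap.range A.mulVecLin ⊔ LinearMap.range B.mulVecLin := by
    rintro y ⟨x, rfl⟩
    rw [Matrix.mulVecLin_add]
    exact Submodule.add_mem_sup ⟨x, rfl⟩ ⟨x, rfl⟩
  exact le_trans (Submodule.finrank_mono h)
    (Submodule.finrank_add_le_finrank_add_finrank _ _)

lemma rank_vecMulVec_le_one (u w : Fin n → ℝ) : (vecMulVec u w).rank ≤ 1 := by
  rw [vecMulVec_eq (Fin 1)]
  exact le_trans (Matrix.rank_mul_le_left _ _)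
    (by have h := Matrix.rank_le_card_width (replicateCol (Fin 1) u); simp at h; exact h)

lemma rank_smul_vmv_le (t : ℝ) (u w : Fin n → ℝ) : (t • vecMulVec u w).rank ≤ 1 := by
  have h : t • vecMulVec u w = vecMulVec (t • u) w := by
    ext i j; simp [vecMulVec_apply, mul_assoc]
  rw [h]; exact rank_vecMulVec_le_one _ _

lemma rank_sum_le {α : Type*} (s : Finset α) (f : α → Matrix (Fin n) (Fin n) ℝ) :
    (∑ m ∈ s, f m).rank ≤ ∑ m ∈ s, (f m).rank := by
  classical
  induction s using Finset.induction with
  | empty => simp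
  | insert _ _ h ih =>
      rw [Finset.sum_insert h, Finset.sum_insert h]
      exact le_trans (rank_add_le' _ _) (by omega)

lemma two_unknowns (r11 r12 r13 r21 r22 r23 : ℝ) :
    ∃ a b c : ℝ, ¬(a = 0 ∧ b = 0 ∧ c = 0) ∧
      r11*a + r12*b + r13*c = 0 ∧ r21*a + r22*b + r23*c = 0 := by
  classical
  set M : Matrix (Fin 2) (Fin 3) ℝ := !![r11, r12, r13; r21, r22, r23] with hM
  have hker : LinearMap.ker M.mulVecLin ≠ ⊥ := by
    intro h
    have hinj : Function.Injective M.mulVecLin := LinearMap.ker_eq_bot.mp h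
    have := LinearMap.finrank_le_finrank_of_injective hinj
    simp [Module.finrank_pi] at this
  obtain ⟨v, hv, hvne⟩ := Submodule.exists_mem_ne_zero_of_ne_bot hker
  refine ⟨v 0, v 1, v 2, ?_, ?_, ?_⟩
  · rintro ⟨h0, h1, h2⟩
    apply hvne
    funext i
    fin_cases i <;> assumption
  · have := congrFun (LinearMap.mem_ker.mp hv) 0
    simpa [hM, Matrix.mulVec, dotProduct, Fin.sum_univ_three, mul_comm] using this
  · have := congrFun (LinearMap.mem_ker.mp hv) 1
    simpa [hM, Matrix.mulVec, dotProduct, Fin.sum_univ_three, mul_comm] using this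

lemma frob_add (A X Y : Matrix (Fin n) (Fin n) ℝ) : frob A (X + Y) = frob A X + frob A Y := by
  simp [frob, mul_add]

lemma frob_smul (A : Matrix (Fin n) (Fin n) ℝ) (t : ℝ) (X : Matrix (Fin n) (Fin n) ℝ) :
    frob A (t • X) = t * frob A X := by
  simp [frob, Matrix.mul_smul]

-- rank ≤ 1 decomposition
lemma rank_le_one_decomp (X : Matrix (Fin n) (Fin n) ℝ) (hpsd : X.PosSemidef)
    (hr : X.rank ≤ 1) : X = 0 ∨ ∃ v : Fin n → ℝ, v ≠ 0 ∧ X = vecMulVec v v := by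
  classical
  have hH : X.IsHermitian := hpsd.1
  set d := hH.eigenvalues with hd
  set u : Fin n → Fin n → ℝ :=
    fun m k => (hH.eigenvectorUnitary : Matrix (Fin n) (Fin n) ℝ) k m with hu
  have hspec : X = ∑ m, d m • vecMulVec (u m) (u m) := spec_sum X hH
  have hd0 : ∀ m, 0 ≤ d m := hpsd.eigenvalues_nonneg
  by_cases hXz : X = 0
  · exact Or.inl hXz
  right
  have hcard : Fintype.card {i // d i ≠ 0} ≤ 1 := by
    rw [← hH.rank_eq_card_non_zero_eigs]
    exact hr
  -- there is some nonzero eigenvalue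
  have hex : ∃ i, d i ≠ 0 := by
    by_contra hall
    push_neg at hall
    apply hXz
    rw [hspec]
    apply Finset.sum_eq_zero
    intro m _
    rw [hall m, zero_smul]
  obtain ⟨i, hi⟩ := hex
  have huniq : ∀ m, m ≠ i → d m = 0 := by
    intro m hm
    by_contra hdm
    have : 1 < Fintype.card {i // d i ≠ 0} :=
      Fintype.one_lt_card_iff_nontrivial.mpr ⟨⟨⟨m, hdm⟩, ⟨i, hi⟩, by simp [hm]⟩⟩
    omega
  have hXeq : X = d i • vecMulVec (u i) (u i) := by
    rw [hspec]
    rw [Finset.sum_eq_single i]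
    · intro m _ hm
      rw [huniq m hm, zero_smul]
    · intro h; exact absurd (Finset.mem_univ i) h
  set v : Fin n → ℝ := Real.sqrt (d i) • u i with hv
  have hXv : X = vecMulVec v v := by
    rw [hXeq]
    ext k l
    simp only [vecMulVec_apply, hv, Pi.smul_apply, smul_eq_mul, Matrix.smul_apply]
    have h2 : Real.sqrt (d i) * Real.sqrt (d i) = d i := Real.mul_self_sqrt (hd0 i)
    linear_combination (-(u i k * u i l)) * h2
  refine ⟨v, ?_, hXv⟩
  intro hv0
  apply hXz
  rw [hXv, hv0]
  ext k l
  simp [vecMulVec_apply]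

lemma symm_smul {A : Matrix (Fin n) (Fin n) ℝ} (h : A.IsSymm) (t : ℝ) : (t • A).IsSymm := by
  unfold Matrix.IsSymm
  rw [Matrix.transpose_smul, h.eq]

lemma reduce_step (A₀ B₁ B₂ : Matrix (Fin n) (Fin n) ℝ) (c₁ c₂ : ℝ)
    (F : Set (Matrix (Fin n) (Fin n) ℝ))
    (hF : F = {X | X.IsSymm ∧ X.PosSemidef ∧ frob B₁ X = c₁ ∧ frob B₂ X = c₂})
    (X : Matrix (Fin n) (Fin n) ℝ) (hXF : X ∈ F)
    (hopt : ∀ Y ∈ F, frob A₀ X ≤ frob A₀ Y) (hr : 2 ≤ X.rank) :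
    ∃ X₂ ∈ F, (∀ Y ∈ F, frob A₀ X₂ ≤ frob A₀ Y) ∧ X₂.rank < X.rank := by
  classical
  have hXF' := hXF
  rw [hF] at hXF'
  obtain ⟨hsym, hpsd, hc1, hc2⟩ := hXF'
  have hH : X.IsHermitian := hpsd.1
  set d : Fin n → ℝ := hH.eigenvalues with hd
  set u : Fin n → Fin n → ℝ :=
    fun m k => (hH.eigenvectorUnitary : Matrix (Fin n) (Fin n) ℝ) k m with hu
  set P : Fin n → Matrix (Fin n) (Fin n) ℝ := fun m => vecMulVec (u m) (u m) with hP
  have hspec : X = ∑ m, d m • P m := spec_sum X hH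
  have hd0 : ∀ m, 0 ≤ d m := hpsd.eigenvalues_nonneg
  set s : Finset (Fin n) := Finset.univ.filter (fun m => d m ≠ 0) with hs
  have hrs : X.rank = s.card := by
    rw [hH.rank_eq_card_non_zero_eigs, Fintype.card_subtype]
  have h2s : 2 ≤ s.card := by rw [← hrs]; exact hr
  obtain ⟨i, hi, j, hj, hij⟩ := Finset.one_lt_card.mp (show 1 < s.card by omega)
  have hdi : 0 < d i :=
    lt_of_le_of_ne (hd0 i) (Ne.symm (by simpa [hs] using hi))
  have hdj : 0 < d j :=
    lt_of_le_of_ne (hd0 j) (Ne.symm (by simpa [hs] using hj))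
  set t : Finset (Fin n) := (Finset.univ.erase i).erase j with ht
  have hjmem : j ∈ Finset.univ.erase i := Finset.mem_erase.mpr ⟨hij.symm, Finset.mem_univ j⟩
  set X₀ : Matrix (Fin n) (Fin n) ℝ := ∑ m ∈ t, d m • P m with hX₀
  have hsplit : X = X₀ + d i • P i + d j • P j := by
    rw [hspec, ← Finset.sum_erase_add Finset.univ _ (Finset.mem_univ i),
      ← Finset.sum_erase_add (Finset.univ.erase i) _ hjmem, ← ht, ← hX₀]
    abel
  set CR : Matrix (Fin n) (Fin n) ℝ := vecMulVec (u i) (u j) + vecMulVec (u j) (u i) with hCR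
  obtain ⟨a, b, c, habc, heq1, heq2⟩ := two_unknowns
    (frob B₁ (P i)) (frob B₁ (P j)) (frob B₁ CR)
    (frob B₂ (P i)) (frob B₂ (P j)) (frob B₂ CR)
  set S : Matrix (Fin n) (Fin n) ℝ := a • P i + b • P j + c • CR with hSdef
  have hfrobS : ∀ B : Matrix (Fin n) (Fin n) ℝ,
      frob B S = a * frob B (P i) + b * frob B (P j) + c * frob B CR := by
    intro B
    rw [hSdef, frob_add, frob_add, frob_smul, frob_smul, frob_smul]
  have hS1 : frob B₁ S = 0 := by rw [hfrobS]; linear_combination heq1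
  have hS2 : frob B₂ S = 0 := by rw [hfrobS]; linear_combination heq2
  have hSsym : S.IsSymm := by
    refine ((symm_smul ?_ a).add (symm_smul ?_ b)).add (symm_smul ?_ c)
    · exact vecMulVec_symm (u i)
    · exact vecMulVec_symm (u j)
    · exact cross_symm (u i) (u j)
  obtain ⟨τ, hτpos, hall, hend⟩ := two_by_two (d i) (d j) a b c hdi hdj habc
  have hline : ∀ t' : ℝ, X + t' • S
      = X₀ + ((d i + t'*a) • P i + (d j + t'*b) • P j + (t'*c) • CR) := by
    intro t'
    rw [hsplit, hSdef, smul_add, smul_add, smul_smul, smul_smul, smul_smul,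
      add_smul, add_smul]
    abel
  have hX₀psd : X₀.PosSemidef := by
    rw [hX₀]
    refine Finset.sum_induction _ _ (fun A B hA hB => psd_add hA hB) ?_ ?_
    · constructor
      · simp [Matrix.IsHermitian]
      · intro x; simp
    · intro m _
      exact psd_smul_vmv (hd0 m) (u m)
  have hfeas : ∀ t' : ℝ, |t'| ≤ τ → (X + t' • S) ∈ F := by
    intro t' ht'
    obtain ⟨h1, h2, h3⟩ := hall t' ht'
    rw [hF]
    refine ⟨hsym.add (symm_smul hSsym t'), ?_, ?_, ?_⟩
    · rw [hline t']
      exact psd_add hX₀psd (psd_combo (u i) (u j) _ _ _ h1 h2 h3)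
    · rw [frob_add, frob_smul, hc1, hS1]; ring
    · rw [frob_add, frob_smul, hc2, hS2]; ring
  have hA0S : frob A₀ S = 0 := by
    have h1 := hopt _ (hfeas τ (le_of_eq (abs_of_pos hτpos)))
    have h2 := hopt _ (hfeas (-τ) (le_of_eq (by rw [abs_neg, abs_of_pos hτpos])))
    rw [frob_add, frob_smul] at h1 h2
    nlinarith
  obtain ⟨ε, hεabs, hdet⟩ : ∃ ε : ℝ, |ε| = τ ∧ (d i + ε*a)*(d j + ε*b) = (ε*c)^2 := by
    rcases hend with h | h
    · exact ⟨τ, abs_of_pos hτpos, h⟩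
    · exact ⟨-τ, by rw [abs_neg, abs_of_pos hτpos], h⟩
  obtain ⟨hp', hq', -⟩ := hall ε (le_of_eq hεabs)
  set α : ℝ := Real.sqrt (d i + ε*a) with hα
  set β : ℝ := if 0 ≤ ε*c then Real.sqrt (d j + ε*b) else -Real.sqrt (d j + ε*b) with hβ
  have hα2 : α*α = d i + ε*a := Real.mul_self_sqrt hp'
  have hβ2 : β*β = d j + ε*b := by
    by_cases h : 0 ≤ ε*c
    · rw [hβ, if_pos h]; exact Real.mul_self_sqrt hq'
    · rw [hβ, if_neg h, neg_mul_neg]; exact Real.mul_self_sqrt hq'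
  have hαβ : α*β = ε*c := by
    have hsq : Real.sqrt (d i + ε*a) * Real.sqrt (d j + ε*b) = |ε*c| := by
      rw [← Real.sqrt_mul hp', hdet, Real.sqrt_sq_eq_abs]
    by_cases h : 0 ≤ ε*c
    · rw [hα, hβ, if_pos h, hsq, abs_of_nonneg h]
    · rw [hα, hβ, if_neg h, mul_neg, hsq, abs_of_neg (lt_of_not_ge h), neg_neg]
  set v' : Fin n → ℝ := α • u i + β • u j with hv'
  have hcombo : (d i + ε*a) • P i + (d j + ε*b) • P j + (ε*c) • CR = vecMulVec v' v' := by
    ext k l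
    simp only [hP, hCR, hv', Matrix.add_apply, Matrix.smul_apply, vecMulVec_apply,
      Pi.add_apply, Pi.smul_apply, smul_eq_mul]
    linear_combination (-(u i k * u i l)) * hα2 + (-(u j k * u j l)) * hβ2
      + (-(u i k * u j l + u j k * u i l)) * hαβ
  refine ⟨X + ε • S, hfeas ε (le_of_eq hεabs), ?_, ?_⟩
  · intro Y hY
    rw [frob_add, frob_smul, hA0S, mul_zero, add_zero]
    exact hopt Y hY
  · have hX₂eq : X + ε • S = X₀ + vecMulVec v' v' := by rw [hline ε, hcombo]
    have h1 : (X + ε • S).rank ≤ X₀.rank + 1 := by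
      rw [hX₂eq]
      exact le_trans (rank_add_le' _ _)
        (by have := rank_vecMulVec_le_one v' v'; omega)
    have h2 : X₀.rank ≤ s.card - 2 := by
      have hr0 : X₀.rank ≤ ∑ m ∈ t, (d m • P m).rank := by
        rw [hX₀]; exact rank_sum_le t _
      refine le_trans hr0 ?_
      have hterm : ∀ m ∈ t, (d m • P m).rank ≤ if m ∈ s then 1 else 0 := by
        intro m _
        by_cases hm : m ∈ s
        · rw [if_pos hm, hP]
          exact rank_smul_vmv_le _ _ _
        · rw [if_neg hm]
          have hdm : d m = 0 := by
            by_contra hne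
            exact hm (Finset.mem_filter.mpr ⟨Finset.mem_univ m, hne⟩)
          rw [hdm, zero_smul, Matrix.rank_zero]
      refine le_trans (Finset.sum_le_sum hterm) ?_
      rw [← Finset.card_filter]
      have hsub : t.filter (· ∈ s) ⊆ (s.erase i).erase j := by
        intro m hm
        obtain ⟨hmt, hms⟩ := Finset.mem_filter.mp hm
        have h1 : m ≠ j ∧ (m ≠ i ∧ m ∈ Finset.univ) := by
          rw [ht] at hmt
          exact ⟨(Finset.mem_erase.mp hmt).1, Finset.mem_erase.mp (Finset.mem_erase.mp hmt).2⟩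
        exact Finset.mem_erase.mpr ⟨h1.1, Finset.mem_erase.mpr ⟨h1.2.1, hms⟩⟩
      refine le_trans (Finset.card_le_card hsub) ?_
      rw [Finset.card_erase_of_mem (Finset.mem_erase.mpr ⟨hij.symm, hj⟩),
        Finset.card_erase_of_mem hi]
      omega
    rw [hrs]
    omega

end Helpers

theorem stmt7 {n : ℕ} (A₀ B₁ B₂ : Matrix (Fin n) (Fin n) ℝ)
    (hA₀ : A₀.IsSymm) (hB₁ : B₁.IsSymm) (hB₂ : B₂.IsSymm) (c₁ c₂ : ℝ)
    (F : Set (Matrix (Fin n) (Fin n) ℝ))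
    (hF : F = {X | X.IsSymm ∧ X.PosSemidef ∧ frob B₁ X = c₁ ∧ frob B₂ X = c₂})
    (Xstar : Matrix (Fin n) (Fin n) ℝ) (hXF : Xstar ∈ F)
    (hopt : ∀ Y ∈ F, frob A₀ Xstar ≤ frob A₀ Y) :
    ∃ X' ∈ F, (∀ Y ∈ F, frob A₀ X' ≤ frob A₀ Y) ∧
      (X' = 0 ∨ ∃ v : Fin n → ℝ, v ≠ 0 ∧ X' = Matrix.vecMulVec v v) := by
  have main : ∀ k : ℕ, ∀ X : Matrix (Fin n) (Fin n) ℝ, X ∈ F →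
      (∀ Y ∈ F, frob A₀ X ≤ frob A₀ Y) → X.rank ≤ k →
      ∃ X' ∈ F, (∀ Y ∈ F, frob A₀ X' ≤ frob A₀ Y) ∧
        (X' = 0 ∨ ∃ v : Fin n → ℝ, v ≠ 0 ∧ X' = Matrix.vecMulVec v v) := by
    intro k
    induction k with
    | zero =>
        intro X hXmem hXopt hXrank
        have hpsd : X.PosSemidef := by
          rw [hF] at hXmem; exact hXmem.2.1
        exact ⟨X, hXmem, hXopt, rank_le_one_decomp X hpsd (by omega)⟩
    | succ k ih =>
        intro X hXmem hXopt hXrank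
        by_cases h1 : X.rank ≤ 1
        · have hpsd : X.PosSemidef := by
            rw [hF] at hXmem; exact hXmem.2.1
          exact ⟨X, hXmem, hXopt, rank_le_one_decomp X hpsd h1⟩
        · obtain ⟨X₂, hX₂mem, hX₂opt, hX₂rank⟩ :=
            reduce_step A₀ B₁ B₂ c₁ c₂ F hF X hXmem hXopt (by omega)
          exact ih X₂ hX₂mem hX₂opt (by omega)
  exact main Xstar.rank Xstar hXF hopt le_rfl
end

section
/- Let V = {(x₁x₂, x₁²) : x ∈ ℝ², 1 − x₁x₂ ≥ 0, 1 + x₂² − x₁² ≥ 0} and H = {(X₁₂, X₁₁) : X ∈ Sym(2), X ⪰ 0, 1 − X₁₂ ≥ 0, 1 + X₂₂ − X₁₁ ≥ 0}. Then closure(conv(V)) ≠ closure(H); specifically, the linear functional (y₁, y₂) ↦ y₁ + y₂ is bounded above on conv(V) but unbounded above on H. -/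
open Matrix Set

lemma aux_psd (a : ℝ) (ha : 1 ≤ a) :
    (!![a,0;0,a-1] : Matrix (Fin 2) (Fin 2) ℝ).PosSemidef := by
  refine Matrix.PosSemidef.of_dotProduct_mulVec_nonneg ?_ ?_
  · ext i j; fin_cases i <;> fin_cases j <;>
      simp [Matrix.conjTranspose, Matrix.transpose, vecHead, vecTail]
  · intro x
    have : (star x) ⬝ᵥ (!![a,0;0,a-1] : Matrix (Fin 2) (Fin 2) ℝ) *ᵥ x
        = a * (x 0)^2 + (a-1) * (x 1)^2 := by
      simp [dotProduct, Matrix.mulVec, Fin.sum_univ_two, vecHead, vecTail]; ring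
    rw [this]
    nlinarith [sq_nonneg (x 0), sq_nonneg (x 1)]

theorem stmt8
    (V H : Set (ℝ × ℝ))
    (hV : V = {p | ∃ x₁ x₂ : ℝ, 0 ≤ 1 - x₁ * x₂ ∧ 0 ≤ 1 + x₂ ^ 2 - x₁ ^ 2 ∧
        p = (x₁ * x₂, x₁ ^ 2)})
    (hH : H = {p | ∃ X : Matrix (Fin 2) (Fin 2) ℝ, X.IsSymm ∧ X.PosSemidef ∧
        0 ≤ 1 - X 0 1 ∧ 0 ≤ 1 + X 1 1 - X 0 0 ∧ p = (X 0 1, X 0 0)}) :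
    closure (convexHull ℝ V) ≠ closure H ∧
    (∃ M : ℝ, ∀ p ∈ convexHull ℝ V, p.1 + p.2 ≤ M) ∧
    ¬(∃ M : ℝ, ∀ p ∈ H, p.1 + p.2 ≤ M) := by
  -- the convex closed half-space
  set C : Set (ℝ × ℝ) := {p : ℝ × ℝ | p.1 + p.2 ≤ 3} with hC
  have hlin : IsLinearMap ℝ (fun p : ℝ × ℝ => p.1 + p.2) := by
    constructor
    · intro p q; simp [Prod.fst_add, Prod.snd_add]; ring
    · intro c p; simp [Prod.smul_fst, Prod.smul_snd]; ring
  have hCconv : Convex ℝ C := convex_halfSpace_le hlin 3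
  have hCclosed : IsClosed C :=
    isClosed_le (by continuity) continuous_const
  have hVC : V ⊆ C := by
    rintro p hp
    rw [hV] at hp
    obtain ⟨x₁, x₂, h1, h2, rfl⟩ := hp
    show x₁ * x₂ + x₁ ^ 2 ≤ 3
    nlinarith [sq_nonneg (x₁ + x₂), sq_nonneg (x₁ - x₂), sq_nonneg x₁, sq_nonneg x₂,
      sq_nonneg (x₁*x₂ - 1), sq_nonneg (x₁^2 - 2)]
  have hhullC : convexHull ℝ V ⊆ C := convexHull_min hVC hCconv
  have hclosC : closure (convexHull ℝ V) ⊆ C := closure_minimal hhullC hCclosed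
  -- membership of (0, a) in H for a ≥ 1
  have hmem : ∀ a : ℝ, 1 ≤ a → ((0 : ℝ), a) ∈ H := by
    intro a ha
    rw [hH]
    refine ⟨!![a,0;0,a-1], ?_, aux_psd a ha, ?_, ?_, ?_⟩
    · ext i j; fin_cases i <;> fin_cases j <;>
        simp [Matrix.transpose, vecHead, vecTail]
    · norm_num
    · norm_num
    · norm_num
  refine ⟨?_, ⟨3, hhullC⟩, ?_⟩
  · intro heq
    have h5 : ((0 : ℝ), (5 : ℝ)) ∈ closure H := subset_closure (hmem 5 (by norm_num))
    rw [← heq] at h5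
    have := hclosC h5
    simp [hC] at this
    linarith
  · rintro ⟨M, hM⟩
    have ha : 1 ≤ max M 1 + 1 := by
      have := le_max_right M 1; linarith
    have := hM _ (hmem (max M 1 + 1) ha)
    simp at this
    have := le_max_left M 1
    linarith
end

section
/- Let T = {x ∈ ℝ³ : ‖x‖₂ ≤ 1} and V = {(3x₁−2x₂−4x₃, 5x₁x₂+7x₁x₃−9x₂x₃) : x ∈ T}. Then conv(V) equals the set {(3x₁−2x₂−4x₃, 5X₁₂+7X₁₃−9X₂₃) : [[1,xᵀ],[x,X]] ⪰ 0, 1 − X₁₁ − X₂₂ − X₃₃ ≥ 0}, where X ranges over symmetric 3×3 matrices and x over ℝ³. -/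
open Matrix Set Finset

/-- Diagonal bilinear form with weights `w`. -/
def gbl {κ : Type*} [Fintype κ] (w : κ → ℝ) (u v : κ → ℝ) : ℝ := ∑ k, w k * u k * v k

lemma gbl_expand {κ : Type*} [Fintype κ] (w u v : κ → ℝ) (α β : ℝ) :
    gbl w (fun k => α * u k + β * v k) (fun k => α * u k + β * v k)
      = α^2 * gbl w u u + (2*α*β) * gbl w u v + β^2 * gbl w v v := by
  simp only [gbl, Finset.mul_sum, ← Finset.sum_add_distrib]
  exact Finset.sum_congr rfl fun k _ => by ring

lemma sz_decomp {ι κ : Type*} [Fintype ι] [Fintype κ] (w : κ → ℝ) (c : ι → κ → ℝ)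
    (hsum : ∑ i, gbl w (c i) (c i) = 0) :
    ∃ c' : ι → κ → ℝ, (∀ a b, ∑ i, c' i a * c' i b = ∑ i, c i a * c i b) ∧
      ∀ i, gbl w (c' i) (c' i) = 0 := by
  classical
  suffices aux : ∀ (n : ℕ) (c : ι → κ → ℝ),
      (Finset.univ.filter fun i => gbl w (c i) (c i) ≠ 0).card ≤ n →
      (∑ i, gbl w (c i) (c i)) = 0 →
      ∃ c' : ι → κ → ℝ, (∀ a b, ∑ i, c' i a * c' i b = ∑ i, c i a * c i b) ∧
        ∀ i, gbl w (c' i) (c' i) = 0 by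
    exact aux _ c le_rfl hsum
  intro n
  induction n with
  | zero =>
    intro c hcard _
    refine ⟨c, fun a b => rfl, fun i => ?_⟩
    by_contra h
    have : i ∈ Finset.univ.filter fun i => gbl w (c i) (c i) ≠ 0 := by
      simp [h]
    have := Finset.card_pos.mpr ⟨i, this⟩
    omega
  | succ n ih =>
    intro c hcard hsum
    by_cases hall : ∀ i, gbl w (c i) (c i) = 0
    · exact ⟨c, fun a b => rfl, hall⟩
    push_neg at hall
    obtain ⟨i, hi⟩ := hall
    -- find an index of opposite sign
    have hex : ∃ j, gbl w (c i) (c i) * gbl w (c j) (c j) < 0 := by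
      by_contra h
      push_neg at h
      have h1 : 0 < ∑ j, gbl w (c i) (c i) * gbl w (c j) (c j) := by
        refine Finset.sum_pos' (fun j _ => h j) ⟨i, Finset.mem_univ i, ?_⟩
        exact mul_self_pos.mpr hi
      rw [← Finset.mul_sum, hsum, mul_zero] at h1
      exact lt_irrefl 0 h1
    obtain ⟨j, hij⟩ := hex
    have hji : j ≠ i := by
      rintro rfl
      exact absurd hij (not_lt.mpr (mul_self_nonneg _))
    set gi := gbl w (c i) (c i) with hgi_def
    set gj := gbl w (c j) (c j) with hgj_def
    set bb := gbl w (c i) (c j) with hbb_def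
    clear_value gi gj bb
    have hgj : gj ≠ 0 := by
      intro h; rw [h, mul_zero] at hij; exact lt_irrefl _ hij
    have hDpos : 0 < bb^2 - gi * gj := by nlinarith [sq_nonneg bb]
    set γ := (-bb + Real.sqrt (bb^2 - gi*gj))/gj with hγ_def
    have hroot : gj*γ^2 + 2*bb*γ + gi = 0 := by
      have hs : Real.sqrt (bb^2 - gi*gj) ^ 2 = bb^2 - gi*gj := Real.sq_sqrt hDpos.le
      rw [hγ_def]
      have hs' : Real.sqrt (bb^2 - gj*gi) ^ 2 = bb^2 - gj*gi := by rw [mul_comm gj gi]; exact hs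
      field_simp
      nlinarith [hs, hs']
    clear_value γ
    set ρ := Real.sqrt (1+γ^2) with hρ_def
    have hρ2 : ρ^2 = 1+γ^2 := Real.sq_sqrt (by positivity)
    have hρ0 : ρ ≠ 0 := by
      have : (0:ℝ) < 1 + γ^2 := by positivity
      exact (Real.sqrt_pos.mpr this).ne'
    clear_value ρ
    set ci' : κ → ℝ := fun k => (1/ρ) * c i k + (γ/ρ) * c j k with hci'_def
    set cj' : κ → ℝ := fun k => (1/ρ) * c j k + (-γ/ρ) * c i k with hcj'_def
    set c'' : ι → κ → ℝ := Function.update (Function.update c i ci') j cj' with hc''_def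
    have hc''i : c'' i = ci' := by
      rw [hc''_def, Function.update_of_ne (Ne.symm hji), Function.update_self]
    have hc''j : c'' j = cj' := by rw [hc''_def, Function.update_self]
    have hc''k : ∀ k, k ≠ i → k ≠ j → c'' k = c k := by
      intro k hki hkj
      rw [hc''_def, Function.update_of_ne hkj, Function.update_of_ne hki]
    -- new g value at i is zero
    have hgi' : gbl w (c'' i) (c'' i) = 0 := by
      rw [hc''i, hci'_def, gbl_expand, ← hgi_def, ← hgj_def, ← hbb_def]
      have e : (1/ρ)^2 * gi + (2*(1/ρ)*(γ/ρ))*bb + (γ/ρ)^2*gj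
          = (gj*γ^2 + 2*bb*γ + gi)/ρ^2 := by
        field_simp; ring
      rw [e, hroot, zero_div]
    have hjmem : j ∈ Finset.univ.erase i := Finset.mem_erase.mpr ⟨hji, Finset.mem_univ j⟩
    -- outer products preserved
    have hA : ∀ a b, ∑ k, c'' k a * c'' k b = ∑ k, c k a * c k b := by
      intro a b
      rw [← Finset.add_sum_erase _ (fun k => c'' k a * c'' k b) (Finset.mem_univ i),
          ← Finset.add_sum_erase _ (fun k => c'' k a * c'' k b) hjmem,
          ← Finset.add_sum_erase _ (fun k => c k a * c k b) (Finset.mem_univ i),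
          ← Finset.add_sum_erase _ (fun k => c k a * c k b) hjmem]
      have htail : ∑ k ∈ (Finset.univ.erase i).erase j, c'' k a * c'' k b
          = ∑ k ∈ (Finset.univ.erase i).erase j, c k a * c k b := by
        refine Finset.sum_congr rfl fun k hk => ?_
        rw [Finset.mem_erase, Finset.mem_erase] at hk
        rw [hc''k k hk.2.1 hk.1]
      rw [htail, hc''i, hc''j, hci'_def, hcj'_def]
      have hne : ρ^2 ≠ 0 := pow_ne_zero 2 hρ0
      field_simp
      linear_combination (-(c i a * c i b + c j a * c j b)) * hρ2
    -- new sum is zero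
    have hswap : ∀ (d : ι → κ → ℝ), ∑ k, gbl w (d k) (d k) = ∑ m, w m * ∑ k, d k m * d k m := by
      intro d
      simp only [gbl]
      rw [Finset.sum_comm]
      refine Finset.sum_congr rfl fun m _ => ?_
      rw [Finset.mul_sum]
      exact Finset.sum_congr rfl fun k _ => by ring
    have hsum' : ∑ k, gbl w (c'' k) (c'' k) = 0 := by
      rw [hswap]
      have : ∀ m, w m * ∑ k, c'' k m * c'' k m = w m * ∑ k, c k m * c k m := by
        intro m; rw [hA m m]
      rw [Finset.sum_congr rfl fun m _ => this m, ← hswap, hsum]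
    -- cardinality decreases
    have hsub : (Finset.univ.filter fun k => gbl w (c'' k) (c'' k) ≠ 0) ⊆
        (Finset.univ.filter fun k => gbl w (c k) (c k) ≠ 0).erase i := by
      intro k hk
      rw [Finset.mem_filter] at hk
      have hki : k ≠ i := by
        rintro rfl; exact hk.2 hgi'
      rw [Finset.mem_erase, Finset.mem_filter]
      refine ⟨hki, Finset.mem_univ k, ?_⟩
      by_cases hkj : k = j
      · subst hkj
        intro h; rw [← hgj_def] at h; exact hgj h
      · rw [← hc''k k hki hkj]; exact hk.2
    have himem : i ∈ Finset.univ.filter fun k => gbl w (c k) (c k) ≠ 0 := by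
      rw [Finset.mem_filter, ← hgi_def]; exact ⟨Finset.mem_univ i, hi⟩
    have hcard' : (Finset.univ.filter fun k => gbl w (c'' k) (c'' k) ≠ 0).card ≤ n := by
      have h1 := Finset.card_le_card hsub
      rw [Finset.card_erase_of_mem himem] at h1
      omega
    obtain ⟨c', hA', hz⟩ := ih c'' hcard' hsum'
    exact ⟨c', fun a b => (hA' a b).trans (hA a b), hz⟩

lemma dot_expand {n : Type*} [Fintype n] (M : Matrix n n ℝ) (y : n → ℝ) :
    star y ⬝ᵥ M *ᵥ y = ∑ a, ∑ b, y a * M a b * y b := by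
  simp [dotProduct, Matrix.mulVec, Finset.mul_sum, mul_assoc]

lemma psd_of_combo {n : Type*} [Fintype n] {M M' M'' : Matrix n n ℝ}
    (hM : M.PosSemidef) (hM' : M'.PosSemidef) {a b : ℝ} (ha : 0 ≤ a) (hb : 0 ≤ b)
    (h : ∀ i j, M'' i j = a * M i j + b * M' i j) : M''.PosSemidef := by
  refine Matrix.PosSemidef.of_dotProduct_mulVec_nonneg ?_ ?_
  · ext i j
    rw [Matrix.conjTranspose_apply, star_trivial, h, h]
    have e1 : M j i = M i j := by
      conv_lhs => rw [← hM.1]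
      rw [Matrix.conjTranspose_apply, star_trivial]
    have e2 : M' j i = M' i j := by
      conv_lhs => rw [← hM'.1]
      rw [Matrix.conjTranspose_apply, star_trivial]
    rw [e1, e2]
  · intro y
    have k1 := hM.dotProduct_mulVec_nonneg y
    have k2 := hM'.dotProduct_mulVec_nonneg y
    rw [dot_expand] at k1 k2 ⊢
    have e : ∑ i, ∑ j, y i * M'' i j * y j
        = a * (∑ i, ∑ j, y i * M i j * y j) + b * (∑ i, ∑ j, y i * M' i j * y j) := by
      rw [Finset.mul_sum, Finset.mul_sum, ← Finset.sum_add_distrib]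
      refine Finset.sum_congr rfl fun i _ => ?_
      rw [Finset.mul_sum, Finset.mul_sum, ← Finset.sum_add_distrib]
      refine Finset.sum_congr rfl fun j _ => ?_
      rw [h]; ring
    rw [e]
    exact add_nonneg (mul_nonneg ha k1) (mul_nonneg hb k2)

theorem stmt18
    (V W : Set (ℝ × ℝ))
    (hV : V = {p | ∃ x : Fin 3 → ℝ, x ⬝ᵥ x ≤ 1 ∧
        p = (3 * x 0 - 2 * x 1 - 4 * x 2,
             5 * x 0 * x 1 + 7 * x 0 * x 2 - 9 * x 1 * x 2)})
    (hW : W = {p | ∃ (x : Fin 3 → ℝ) (X : Matrix (Fin 3) (Fin 3) ℝ),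
        X.IsSymm ∧ (momMat x X).PosSemidef ∧ 0 ≤ 1 - X 0 0 - X 1 1 - X 2 2 ∧
        p = (3 * x 0 - 2 * x 1 - 4 * x 2,
             5 * X 0 1 + 7 * X 0 2 - 9 * X 1 2)}) :
    convexHull ℝ V = W := by
  have hent : ∀ (x : Fin 3 → ℝ) (X : Matrix (Fin 3) (Fin 3) ℝ),
      (momMat x X (Sum.inl 0) (Sum.inl 0) = 1) ∧
      (∀ a, momMat x X (Sum.inl 0) (Sum.inr a) = x a) ∧
      (∀ a, momMat x X (Sum.inr a) (Sum.inl 0) = x a) ∧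
      (∀ a b, momMat x X (Sum.inr a) (Sum.inr b) = X a b) := by
    intro x X
    refine ⟨?_, fun a => ?_, fun a => ?_, fun a b => ?_⟩ <;>
      simp [momMat, Matrix.one_apply]
  subst hV hW
  apply Set.Subset.antisymm
  · apply convexHull_min
    · -- V ⊆ W
      rintro p ⟨x, hx, rfl⟩
      refine ⟨x, Matrix.of fun a b => x a * x b, ?_, ?_, ?_, ?_⟩
      · ext i j; simp [Matrix.transpose_apply, mul_comm]
      · have hE : ∀ a b, momMat x (Matrix.of fun a b => x a * x b) a b
            = (Sum.elim (fun _ => (1:ℝ)) x) a * (Sum.elim (fun _ => (1:ℝ)) x) b := by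
          rintro (a | a) (b | b)
          · simp [momMat, Matrix.one_apply, Subsingleton.elim a b]
          · simp [momMat]
          · simp [momMat]
          · simp [momMat]
        refine Matrix.PosSemidef.of_dotProduct_mulVec_nonneg ?_ ?_
        · ext i j
          rw [Matrix.conjTranspose_apply, star_trivial, hE, hE]
          ring
        · intro y
          rw [dot_expand]
          have e : ∑ a, ∑ b, y a * momMat x (Matrix.of fun a b => x a * x b) a b * y b
              = (∑ a, (Sum.elim (fun _ => (1:ℝ)) x) a * y a) *
                (∑ b, (Sum.elim (fun _ => (1:ℝ)) x) b * y b) := by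
            rw [Finset.sum_mul_sum]
            refine Finset.sum_congr rfl fun a _ => Finset.sum_congr rfl fun b _ => ?_
            rw [hE]; ring
          rw [e]
          exact mul_self_nonneg _
      · have : x ⬝ᵥ x = x 0 * x 0 + x 1 * x 1 + x 2 * x 2 := by
          simp [dotProduct, Fin.sum_univ_three]
        rw [this] at hx
        simp only [Matrix.of_apply]
        linarith
      · simp only [Matrix.of_apply, Prod.mk.injEq]
        exact ⟨by trivial, by ring⟩
    · -- W is convex
      rintro p ⟨x, X, hXs, hpsd, htr, rfl⟩ q ⟨x', X', hXs', hpsd', htr', rfl⟩ a b ha hb hab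
      refine ⟨fun k => a * x k + b * x' k, Matrix.of fun u v => a * X u v + b * X' u v,
        ?_, ?_, ?_, ?_⟩
      · ext i j
        simp [Matrix.transpose_apply, hXs.apply i j, hXs'.apply i j]
      · refine psd_of_combo hpsd hpsd' ha hb fun i j => ?_
        rcases i with i | i <;> rcases j with j | j
        · simp [momMat, Matrix.one_apply, Subsingleton.elim i j]; linarith
        · simp [momMat]
        · simp [momMat]
        · simp [momMat]
      · simp only [Matrix.of_apply]
        nlinarith [mul_nonneg ha htr, mul_nonneg hb htr']
      · rw [Prod.ext_iff]
        constructor <;>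
          simp only [Prod.fst_add, Prod.snd_add, Prod.smul_fst, Prod.smul_snd,
            smul_eq_mul, Matrix.of_apply] <;> ring
  · -- W ⊆ convexHull V  (hard direction)
    rintro p ⟨x, X, hXs, hpsd, htr, rfl⟩
    classical
    obtain ⟨he00, he0r, _, herr⟩ := hent x X
    obtain ⟨B, hB⟩ : ∃ B : Matrix (Fin 1 ⊕ Fin 3) (Fin 1 ⊕ Fin 3) ℝ, momMat x X = Bᴴ * B := by
      open scoped MatrixOrder in
      obtain ⟨B, hB⟩ := CStarAlgebra.nonneg_iff_eq_star_mul_self.mp hpsd.nonneg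
      exact ⟨B, hB⟩
    set c : (Fin 1 ⊕ Fin 3) → (Fin 1 ⊕ Fin 3) → ℝ := fun i k => B i k with hc
    have hM : ∀ a b, momMat x X a b = ∑ i, c i a * c i b := by
      intro a b
      rw [hB]
      simp [Matrix.mul_apply, Matrix.conjTranspose_apply, hc]
    set w : (Fin 1 ⊕ Fin 3) → ℝ :=
      Sum.elim (fun _ : Fin 1 => -(X 0 0 + X 1 1 + X 2 2)) (fun _ : Fin 3 => (1:ℝ)) with hw
    have hswap : ∀ (d : (Fin 1 ⊕ Fin 3) → (Fin 1 ⊕ Fin 3) → ℝ),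
        ∑ k, gbl w (d k) (d k) = ∑ m, w m * ∑ k, d k m * d k m := by
      intro d
      simp only [gbl]
      rw [Finset.sum_comm]
      refine Finset.sum_congr rfl fun m _ => ?_
      rw [Finset.mul_sum]
      exact Finset.sum_congr rfl fun k _ => by ring
    have hgsum : ∑ i, gbl w (c i) (c i) = 0 := by
      rw [hswap]
      have e : ∀ m, ∑ i, c i m * c i m = momMat x X m m := fun m => (hM m m).symm
      simp only [e]
      rw [Fintype.sum_sum_type]
      simp only [hw, Sum.elim_inl, Sum.elim_inr, Fin.sum_univ_one, Fin.sum_univ_three,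
        he00, herr]
      ring
    obtain ⟨d, hd, hdz⟩ := sz_decomp w c hgsum
    have hMd : ∀ a b, momMat x X a b = ∑ i, d i a * d i b :=
      fun a b => (hM a b).trans (hd a b).symm
    -- the per-vector identity coming from  gbl w (d i) (d i) = 0
    have hg : ∀ i, d i (Sum.inr 0) * d i (Sum.inr 0) + d i (Sum.inr 1) * d i (Sum.inr 1)
        + d i (Sum.inr 2) * d i (Sum.inr 2)
        = (X 0 0 + X 1 1 + X 2 2) * (d i (Sum.inl 0) * d i (Sum.inl 0)) := by
      intro i
      have h := hdz i
      simp only [gbl, Fintype.sum_sum_type, hw, Sum.elim_inl, Sum.elim_inr,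
        Fin.sum_univ_one, Fin.sum_univ_three] at h
      linarith
    set lam : (Fin 1 ⊕ Fin 3) → ℝ := fun i => d i (Sum.inl 0) * d i (Sum.inl 0) with hlam
    set u : (Fin 1 ⊕ Fin 3) → Fin 3 → ℝ :=
      fun i j => if d i (Sum.inl 0) = 0 then 0 else d i (Sum.inr j) / d i (Sum.inl 0) with hu
    have hv0 : ∀ i, d i (Sum.inl 0) = 0 → ∀ j : Fin 3, d i (Sum.inr j) = 0 := by
      intro i h j
      have hsq0 : d i (Sum.inr 0) * d i (Sum.inr 0) + d i (Sum.inr 1) * d i (Sum.inr 1)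
          + d i (Sum.inr 2) * d i (Sum.inr 2) = 0 := by rw [hg i, h]; ring
      have h0 : d i (Sum.inr 0) = 0 := mul_self_eq_zero.mp (by
        nlinarith [mul_self_nonneg (d i (Sum.inr 1)), mul_self_nonneg (d i (Sum.inr 2))])
      have h1 : d i (Sum.inr 1) = 0 := mul_self_eq_zero.mp (by
        nlinarith [mul_self_nonneg (d i (Sum.inr 0)), mul_self_nonneg (d i (Sum.inr 2))])
      have h2 : d i (Sum.inr 2) = 0 := mul_self_eq_zero.mp (by
        nlinarith [mul_self_nonneg (d i (Sum.inr 0)), mul_self_nonneg (d i (Sum.inr 1))])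
      fin_cases j
      · exact h0
      · exact h1
      · exact h2
    have hkey1 : ∀ i (a : Fin 3), d i (Sum.inl 0) * d i (Sum.inr a) = lam i * u i a := by
      intro i a
      by_cases h : d i (Sum.inl 0) = 0
      · simp [hu, hlam, h]
      · simp only [hu, hlam, if_neg h]
        field_simp
    have hkey2 : ∀ i (a b : Fin 3),
        d i (Sum.inr a) * d i (Sum.inr b) = lam i * (u i a * u i b) := by
      intro i a b
      by_cases h : d i (Sum.inl 0) = 0
      · simp [hu, hlam, h, hv0 i h a]
      · simp only [hu, hlam, if_neg h]
        field_simp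
    have hnorm : ∀ i, u i ⬝ᵥ u i ≤ 1 := by
      intro i
      have : u i ⬝ᵥ u i = u i 0 * u i 0 + u i 1 * u i 1 + u i 2 * u i 2 := by
        simp [dotProduct, Fin.sum_univ_three]
      rw [this]
      by_cases h : d i (Sum.inl 0) = 0
      · simp [hu, h]
      · simp only [hu, if_neg h]
        have ht : 0 < d i (Sum.inl 0) * d i (Sum.inl 0) := by
          rcases lt_or_gt_of_ne h with h' | h' <;> nlinarith
        rw [div_mul_div_comm, div_mul_div_comm, div_mul_div_comm, ← add_div,
          ← add_div, div_le_one ht]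
        nlinarith [hg i]
    have hlamsum : ∑ i, lam i = 1 := by
      have := hMd (Sum.inl 0) (Sum.inl 0)
      rw [he00] at this
      rw [hlam, ← this]
    have hx : ∀ a : Fin 3, x a = ∑ i, lam i * u i a := by
      intro a
      rw [← he0r a, hMd]
      exact Finset.sum_congr rfl fun i _ => hkey1 i a
    have hXe : ∀ a b : Fin 3, X a b = ∑ i, lam i * (u i a * u i b) := by
      intro a b
      rw [← herr a b, hMd]
      exact Finset.sum_congr rfl fun i _ => hkey2 i a b
    set z : (Fin 1 ⊕ Fin 3) → ℝ × ℝ := fun i =>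
      (3 * u i 0 - 2 * u i 1 - 4 * u i 2,
       5 * u i 0 * u i 1 + 7 * u i 0 * u i 2 - 9 * u i 1 * u i 2) with hz
    have hmem := Finset.centerMass_mem_convexHull (Finset.univ : Finset (Fin 1 ⊕ Fin 3))
      (w := lam) (z := z) (fun i _ => mul_self_nonneg _)
      (by rw [hlamsum]; norm_num)
      (fun i _ => show z i ∈ {p : ℝ × ℝ | ∃ x : Fin 3 → ℝ, x ⬝ᵥ x ≤ 1 ∧
        p = (3 * x 0 - 2 * x 1 - 4 * x 2,
             5 * x 0 * x 1 + 7 * x 0 * x 2 - 9 * x 1 * x 2)} from ⟨u i, hnorm i, rfl⟩)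
    have hcm : Finset.univ.centerMass lam z
        = (3 * x 0 - 2 * x 1 - 4 * x 2, 5 * X 0 1 + 7 * X 0 2 - 9 * X 1 2) := by
      rw [Finset.centerMass, hlamsum, inv_one, one_smul]
      rw [Prod.ext_iff]
      constructor
      · rw [Prod.fst_sum]
        simp only [hz, Prod.smul_fst, smul_eq_mul]
        rw [hx 0, hx 1, hx 2, Finset.mul_sum, Finset.mul_sum, Finset.mul_sum,
          ← Finset.sum_sub_distrib, ← Finset.sum_sub_distrib]
        exact Finset.sum_congr rfl fun i _ => by ring
      · rw [Prod.snd_sum]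
        simp only [hz, Prod.smul_snd, smul_eq_mul]
        rw [hXe 0 1, hXe 0 2, hXe 1 2, Finset.mul_sum, Finset.mul_sum, Finset.mul_sum,
          ← Finset.sum_add_distrib, ← Finset.sum_sub_distrib]
        exact Finset.sum_congr rfl fun i _ => by ring
    exact hcm ▸ hmem
end
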